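/- arXiv:1709.08959 — 9 statements merged into one kernel-verified Lean document; each statement's English description precedes it below -/
import Mathlib

section
/- Let Φ : B(S^{n-1})₊ → L¹(μ) satisfy Φ(f·χ_A) = Φ(f)·χ_A for every bounded nonnegative Borel function f on S^{n-1} and every Borel set A. Then for any finite sequences (f_i)_{i=1}^m, (g_i)_{i=1}^m in B(S^{n-1})₊ there exist f, g ∈ B(S^{n-1})₊ such that: (i) |f(t)| ≤ max_i |f_i(t)| for all t; (ii) |g(t)| ≤ max_i |g_i(t)| for all t; (iii) |f(t) − g(t)| ≤ max_i |f_i(t) − g_i(t)| for all t; (iv) Φ(f) − Φ(g) = max_{1≤i≤m} (Φ(f_i) − Φ(g_i)) in L¹(μ). -/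
/-!
Let `dᵢ` be a measurable representative of `Φ(fᵢ) − Φ(gᵢ)`. Split the sphere into measurable
sets `Aᵢ` on which `dᵢ` realises `maxⱼ dⱼ` (the sets `{dᵢ = maxⱼ dⱼ}` cover, and `disjointed`
makes them a partition), and glue `f = Σ fᵢ χ_{Aᵢ}`, `g = Σ gᵢ χ_{Aᵢ}`. Pointwise, `f` and `g`
agree with some pair `fᵢ, gᵢ`, which gives (i)–(iii). Since `f χ_{Aᵢ} = fᵢ χ_{Aᵢ}`, the locality
of `Φ` gives `Φ(f) = Φ(fᵢ)` a.e. on `Aᵢ`, and likewise for `g`, which gives (iv).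
-/

open MeasureTheory Filter Topology

/-- The cone `B(S^{n-1})₊` of bounded nonnegative Borel functions on the sphere. -/
def BddBorelNN {n : ℕ} (f : Metric.sphere (0 : EuclideanSpace ℝ (Fin n)) 1 → ℝ) : Prop :=
  Measurable f ∧ (∃ C : ℝ, ∀ t, f t ≤ C) ∧ ∀ t, 0 ≤ f t

open Set Function

section Partition

variable {α ι : Type*} [MeasurableSpace α]

theorem measurableSet_disjointed [Preorder ι] [LocallyFiniteOrderBot ι] {B : ι → Set α}
    (hB : ∀ i, MeasurableSet (B i)) (i : ι) : MeasurableSet (disjointed B i) :=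
  disjointedRec (fun _ j ht => ht.diff (hB j)) (hB i)

theorem exists_measurable_partition_forall_mem_eq_iSup [LinearOrder ι]
    [LocallyFiniteOrderBot ι] [Finite ι] [Nonempty ι] {β : Type*}
    [ConditionallyCompleteLinearOrder β] [TopologicalSpace β] [OrderTopology β]
    [SecondCountableTopology β] [MeasurableSpace β] [BorelSpace β]
    {d : ι → α → β} (hd : ∀ i, Measurable (d i)) :
    ∃ A : ι → Set α, (∀ i, MeasurableSet (A i)) ∧ Pairwise (Disjoint on A) ∧
      (∀ t, ∃ i, t ∈ A i) ∧ ∀ i, ∀ t ∈ A i, d i t = ⨆ j, d j t := by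
  set B : ι → Set α := fun i => {t | d i t = ⨆ j, d j t}
  have hB : ∀ i, MeasurableSet (B i) := fun i => measurableSet_eq_fun (hd i) (.iSup hd)
  refine ⟨disjointed B, measurableSet_disjointed hB, disjoint_disjointed B, ?_,
    fun i t ht => disjointed_subset B i ht⟩
  rw [← iUnion_eq_univ_iff, iUnion_disjointed, iUnion_eq_univ_iff]
  exact fun t => exists_eq_ciSup_of_finite

end Partition

section Glue

variable {α ι β : Type*} [Fintype ι] [AddCommMonoid β] {A : ι → Set α}

noncomputable def glue (A : ι → Set α) (f : ι → α → β) : α → β :=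
  fun t => ∑ i, (A i).indicator (f i) t

theorem glue_apply_of_mem (hA : Pairwise (Disjoint on A)) (f : ι → α → β) {i : ι} {t : α}
    (ht : t ∈ A i) : glue A f t = f i t := by
  rw [glue, Finset.sum_eq_single_of_mem i (Finset.mem_univ i), indicator_of_mem ht]
  exact fun j _ hji => indicator_of_notMem (Set.disjoint_left.1 (hA hji.symm) ht) _

theorem indicator_glue (hA : Pairwise (Disjoint on A)) (f : ι → α → β) (i : ι) :
    (A i).indicator (glue A f) = (A i).indicator (f i) := by
  ext t
  by_cases ht : t ∈ A i
  · simp only [indicator_of_mem ht, glue_apply_of_mem hA f ht]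
  · simp only [indicator_of_notMem ht]

end Glue

theorem BddBorelNN.glue {n : ℕ} {ι : Type*} [Fintype ι]
    {A : ι → Set (Metric.sphere (0 : EuclideanSpace ℝ (Fin n)) 1)} (hA : ∀ i, MeasurableSet (A i))
    {f : ι → Metric.sphere (0 : EuclideanSpace ℝ (Fin n)) 1 → ℝ} (hf : ∀ i, BddBorelNN (f i)) :
    BddBorelNN (glue A f) := by
  choose C hC using fun i => (hf i).2.1
  refine ⟨Finset.measurable_sum _ fun i _ => (hf i).1.indicator (hA i),
    ⟨∑ i, C i, fun t => Finset.sum_le_sum fun i _ => ?_⟩,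
    fun t => Finset.sum_nonneg fun i _ => indicator_nonneg (fun x _ => (hf i).2.2 x) t⟩
  exact (indicator_le_self' (fun x _ => (hf i).2.2 x) t).trans (hC i t)

section Locality

variable {α β γ : Type*} [MeasurableSpace α] [Zero β] [Zero γ]

def CommutesWithIndicators (μ : Measure α) (P : (α → β) → Prop) (Φ : (α → β) → α → γ) : Prop :=
  ∀ f, P f → ∀ A, MeasurableSet A → Φ (A.indicator f) =ᵐ[μ] A.indicator (Φ f)

variable {μ : Measure α} {P : (α → β) → Prop} {Φ : (α → β) → α → γ}

theorem CommutesWithIndicators.ae_eq_on_of_indicator_eq (hΦ : CommutesWithIndicators μ P Φ)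
    {f f' : α → β} (hf : P f) (hf' : P f') {A : Set α} (hA : MeasurableSet A)
    (h : A.indicator f = A.indicator f') : ∀ᵐ t ∂μ, t ∈ A → Φ f t = Φ f' t := by
  filter_upwards [hΦ f hf A hA, hΦ f' hf' A hA] with t hft hf't ht
  rw [h, hf't, indicator_of_mem ht, indicator_of_mem ht] at hft
  exact hft.symm

end Locality

theorem CommutesWithIndicators.ae_eq_glue {α β γ ι : Type*} [MeasurableSpace α]
    [AddCommMonoid β] [AddCommMonoid γ] [Fintype ι] {μ : Measure α} {P : (α → β) → Prop}
    {Φ : (α → β) → α → γ} (hΦ : CommutesWithIndicators μ P Φ) {A : ι → Set α}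
    (hAm : ∀ i, MeasurableSet (A i)) (hA : Pairwise (Disjoint on A)) (hcover : ∀ t, ∃ i, t ∈ A i)
    {f : ι → α → β} (hf : ∀ i, P (f i)) (hglue : P (glue A f)) :
    Φ (glue A f) =ᵐ[μ] glue A (fun i => Φ (f i)) := by
  have hlocal : ∀ i, ∀ᵐ t ∂μ, t ∈ A i → Φ (glue A f) t = Φ (f i) t := fun i =>
    hΦ.ae_eq_on_of_indicator_eq hglue (hf i) (hAm i) (indicator_glue hA f i)
  filter_upwards [ae_all_iff.2 hlocal] with t ht
  obtain ⟨i, hi⟩ := hcover t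
  rw [ht i hi, glue_apply_of_mem hA _ hi]

theorem stmt3_general {n : ℕ} (μ : Measure (Metric.sphere (0 : EuclideanSpace ℝ (Fin n)) 1))
    (Φ : (Metric.sphere (0 : EuclideanSpace ℝ (Fin n)) 1 → ℝ) →
      (Metric.sphere (0 : EuclideanSpace ℝ (Fin n)) 1 → ℝ))
    (hΦL1 : ∀ f, BddBorelNN f → Integrable (Φ f) μ)
    (hΦind : ∀ f, BddBorelNN f → ∀ A, MeasurableSet A →
      Φ (Set.indicator A f) =ᵐ[μ] Set.indicator A (Φ f))
    (m : ℕ) (f g : Fin (m + 1) → Metric.sphere (0 : EuclideanSpace ℝ (Fin n)) 1 → ℝ)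
    (hf : ∀ i, BddBorelNN (f i)) (hg : ∀ i, BddBorelNN (g i)) :
    ∃ f₀ g₀, BddBorelNN f₀ ∧ BddBorelNN g₀ ∧
      (∀ t, |f₀ t| ≤ ⨆ i, |f i t|) ∧
      (∀ t, |g₀ t| ≤ ⨆ i, |g i t|) ∧
      (∀ t, |f₀ t - g₀ t| ≤ ⨆ i, |f i t - g i t|) ∧
      (fun t => Φ f₀ t - Φ g₀ t) =ᵐ[μ] (fun t => ⨆ i, (Φ (f i) t - Φ (g i) t)) := by
  have hdiff i := ((hΦL1 _ (hf i)).sub (hΦL1 _ (hg i))).aemeasurable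
  obtain ⟨A, hAm, hA, hcover, hAmax⟩ :=
    exists_measurable_partition_forall_mem_eq_iSup fun i => (hdiff i).measurable_mk
  have hpoint t : ∃ i, glue A f t = f i t ∧ glue A g t = g i t :=
    (hcover t).imp fun _ hi => ⟨glue_apply_of_mem hA f hi, glue_apply_of_mem hA g hi⟩
  refine ⟨glue A f, glue A g, .glue hAm hf, .glue hAm hg, fun t => ?_, fun t => ?_, fun t => ?_, ?_⟩
  · obtain ⟨i, hfi, -⟩ := hpoint t
    exact le_ciSup_of_le (Finite.bddAbove_range _) i (by rw [hfi])
  · obtain ⟨i, -, hgi⟩ := hpoint t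
    exact le_ciSup_of_le (Finite.bddAbove_range _) i (by rw [hgi])
  · obtain ⟨i, hfi, hgi⟩ := hpoint t
    exact le_ciSup_of_le (Finite.bddAbove_range _) i (by rw [hfi, hgi])
  have hΦ : CommutesWithIndicators μ BddBorelNN Φ := hΦind
  filter_upwards [hΦ.ae_eq_glue hAm hA hcover hf (.glue hAm hf),
    hΦ.ae_eq_glue hAm hA hcover hg (.glue hAm hg), ae_all_iff.2 fun i => (hdiff i).ae_eq_mk]
    with t hft hgt hdt
  obtain ⟨i, hi⟩ := hcover t
  simp only [Pi.sub_apply] at hdt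
  rw [hft, hgt, glue_apply_of_mem hA _ hi, glue_apply_of_mem hA _ hi, hdt, iSup_congr hdt]
  exact hAmax i t hi

/-- Lemma "ortogonalidad" (1): for `Φ : B(S^{n-1})₊ → L¹(μ)` with `Φ(f χ_A) = Φ(f) χ_A`,
and finite sequences `(fᵢ), (gᵢ)`, there are `f, g` in the cone dominated as in (i)–(iii)
with `Φ(f) − Φ(g) = max_i (Φ(fᵢ) − Φ(gᵢ))` almost everywhere. -/
theorem stmt3 {n : ℕ} (μ : Measure (Metric.sphere (0 : EuclideanSpace ℝ (Fin n)) 1))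
    [IsFiniteMeasure μ]
    (Φ : (Metric.sphere (0 : EuclideanSpace ℝ (Fin n)) 1 → ℝ) →
      (Metric.sphere (0 : EuclideanSpace ℝ (Fin n)) 1 → ℝ))
    (hΦL1 : ∀ f, BddBorelNN f → Integrable (Φ f) μ)
    (hΦind : ∀ f, BddBorelNN f → ∀ A, MeasurableSet A →
      Φ (Set.indicator A f) =ᵐ[μ] Set.indicator A (Φ f))
    (m : ℕ) (f g : Fin (m + 1) → Metric.sphere (0 : EuclideanSpace ℝ (Fin n)) 1 → ℝ)
    (hf : ∀ i, BddBorelNN (f i)) (hg : ∀ i, BddBorelNN (g i)) :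
    ∃ f₀ g₀, BddBorelNN f₀ ∧ BddBorelNN g₀ ∧
      (∀ t, |f₀ t| ≤ ⨆ i, |f i t|) ∧
      (∀ t, |g₀ t| ≤ ⨆ i, |g i t|) ∧
      (∀ t, |f₀ t - g₀ t| ≤ ⨆ i, |f i t - g i t|) ∧
      (fun t => Φ f₀ t - Φ g₀ t) =ᵐ[μ] (fun t => ⨆ i, (Φ (f i) t - Φ (g i) t)) :=
  stmt3_general μ Φ hΦL1 hΦind m f g hf hg
end

section
/- Let Φ : B(S^{n-1})₊ → L¹(μ) satisfy Φ(f·χ_A) = Φ(f)·χ_A for every f ∈ B(S^{n-1})₊ and Borel set A. Let (f_i)_{i=1}^m, (g_i)_{i=1}^m be finite sequences in B(S^{n-1})₊ and let f = max_{1≤i≤m} f_i (pointwise). Then there exists g ∈ B(S^{n-1})₊ such that: (i) |g(t)| ≤ max_i |g_i(t)| for all t; (ii) |f(t) − g(t)| ≤ max_i |f_i(t) − g_i(t)| for all t; (iii) Φ(f)(t) − Φ(g)(t) ≥ min_{1≤i≤m} (Φ(f_i)(t) − Φ(g_i)(t)) for μ-almost every t. -/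
open MeasureTheory Filter Topology

/-!
At each point select measurably an index `σ t` at which `fᵢ t` is maximal (the least one, via
`disjointed`) and put `g₀ t = g (σ t) t`. The pointwise bounds are then read off at the index
`σ t`; and since `Φ` commutes with indicators, `Φ f` and `Φ g₀` agree a.e. on each fiber
`{σ = i}` with `Φ fᵢ` and `Φ gᵢ`.
-/

section Selection

variable {α ι : Type*} [MeasurableSpace α] [MeasurableSpace ι] [Countable ι]

theorem exists_measurable_index_mem [LinearOrder ι] [LocallyFiniteOrderBot ι] {S : ι → Set α}
    (hS : ∀ i, MeasurableSet (S i)) (hcover : ∀ t, ∃ i, t ∈ S i) :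
    ∃ σ : α → ι, Measurable σ ∧ ∀ t, t ∈ S (σ t) := by
  have hcover' : ∀ t, ∃ i, t ∈ disjointed S i := fun t => by
    simpa only [← Set.mem_iUnion, iUnion_disjointed] using hcover t
  choose σ hσ using hcover'
  refine ⟨σ, measurable_to_countable' fun i => ?_, fun t => disjointed_subset S _ (hσ t)⟩
  have hfiber : σ ⁻¹' {i} = disjointed S i := by
    ext t
    refine ⟨fun (h : σ t = i) => h ▸ hσ t, fun ht => ?_⟩
    by_contra hne
    exact Set.disjoint_left.mp (disjoint_disjointed S hne) (hσ t) ht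
  rw [hfiber, disjointed_eq_inter_compl]
  exact (hS i).inter (.biInter (Set.to_countable _) fun j _ => (hS j).compl)

theorem exists_measurable_apply_eq_ciSup [LinearOrder ι] [LocallyFiniteOrderBot ι] [Finite ι]
    [Nonempty ι] {β : Type*} [ConditionallyCompleteLinearOrder β] [TopologicalSpace β]
    [OrderTopology β] [SecondCountableTopology β] [MeasurableSpace β] [BorelSpace β]
    {f : ι → α → β} (hf : ∀ i, Measurable (f i)) :
    ∃ σ : α → ι, Measurable σ ∧ ∀ t, f (σ t) t = ⨆ i, f i t :=
  exists_measurable_index_mem (fun i => measurableSet_eq_fun (hf i) (Measurable.iSup hf))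
    fun _ => exists_eq_ciSup_of_finite

theorem Measurable.apply_index [MeasurableSingletonClass ι] {β : Type*} [MeasurableSpace β] {σ : α → ι} (hσ : Measurable σ)
    {g : ι → α → β} (hg : ∀ i, Measurable (g i)) : Measurable fun t => g (σ t) t :=
  (measurable_from_prod_countable_left (f := fun p : α × ι => g p.2 p.1) hg).comp
    (measurable_id.prodMk hσ)

end Selection

section Locality

variable {α : Type*} [MeasurableSpace α] {μ : Measure α} {P : (α → ℝ) → Prop}
  {Φ : (α → ℝ) → α → ℝ}

theorem ae_apply_eq_of_eqOn
    (hΦ : ∀ f, P f → ∀ A, MeasurableSet A → Φ (A.indicator f) =ᵐ[μ] A.indicator (Φ f))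
    {f₁ f₂ : α → ℝ} (h₁ : P f₁) (h₂ : P f₂) {A : Set α} (hA : MeasurableSet A)
    (heq : Set.EqOn f₁ f₂ A) : ∀ᵐ t ∂μ, t ∈ A → Φ f₁ t = Φ f₂ t := by
  have h := hΦ f₁ h₁ A hA
  rw [Set.indicator_congr heq] at h
  filter_upwards [h, hΦ f₂ h₂ A hA] with t e₁ e₂ ht
  simpa only [Set.indicator_of_mem ht] using e₁.symm.trans e₂

theorem ae_apply_index_eq {ι : Type*} [MeasurableSpace ι] [MeasurableSingletonClass ι]
    [Countable ι]
    (hΦ : ∀ f, P f → ∀ A, MeasurableSet A → Φ (A.indicator f) =ᵐ[μ] A.indicator (Φ f))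
    {σ : α → ι} (hσ : Measurable σ) {g : ι → α → ℝ} (hg : ∀ i, P (g i))
    (hglued : P fun t => g (σ t) t) :
    ∀ᵐ t ∂μ, Φ (fun s => g (σ s) s) t = Φ (g (σ t)) t := by
  have hfiber : ∀ i, ∀ᵐ t ∂μ, t ∈ σ ⁻¹' {i} → Φ (fun s => g (σ s) s) t = Φ (g i) t :=
    fun i => ae_apply_eq_of_eqOn hΦ hglued (hg i) (hσ (measurableSet_singleton i))
      fun t (ht : σ t = i) => by simp only [ht]
  filter_upwards [ae_all_iff.2 hfiber] with t ht using ht (σ t) rfl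

end Locality

theorem BddBorelNN.apply_index {n : ℕ} {ι : Type*} [Finite ι] [MeasurableSpace ι]
    [MeasurableSingletonClass ι] {g : ι → Metric.sphere (0 : EuclideanSpace ℝ (Fin n)) 1 → ℝ}
    (hg : ∀ i, BddBorelNN (g i)) {σ : Metric.sphere (0 : EuclideanSpace ℝ (Fin n)) 1 → ι}
    (hσ : Measurable σ) : BddBorelNN fun t => g (σ t) t := by
  choose C hC using fun i => (hg i).2.1
  exact ⟨hσ.apply_index fun i => (hg i).1,
    ⟨⨆ i, C i, fun t => (hC (σ t) t).trans (le_ciSup (Finite.bddAbove_range C) (σ t))⟩,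
    fun t => (hg (σ t)).2.2 t⟩

theorem stmt4_general {n : ℕ} (μ : Measure (Metric.sphere (0 : EuclideanSpace ℝ (Fin n)) 1))
    (Φ : (Metric.sphere (0 : EuclideanSpace ℝ (Fin n)) 1 → ℝ) →
      (Metric.sphere (0 : EuclideanSpace ℝ (Fin n)) 1 → ℝ))
    (hΦind : ∀ f, BddBorelNN f → ∀ A, MeasurableSet A →
      Φ (Set.indicator A f) =ᵐ[μ] Set.indicator A (Φ f))
    (m : ℕ) (f g : Fin (m + 1) → Metric.sphere (0 : EuclideanSpace ℝ (Fin n)) 1 → ℝ)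
    (hf : ∀ i, BddBorelNN (f i)) (hg : ∀ i, BddBorelNN (g i)) :
    ∃ g₀, BddBorelNN g₀ ∧
      (∀ t, |g₀ t| ≤ ⨆ i, |g i t|) ∧
      (∀ t, |(⨆ i, f i t) - g₀ t| ≤ ⨆ i, |f i t - g i t|) ∧
      (∀ᵐ t ∂μ, Φ (fun s => ⨆ i, f i s) t - Φ g₀ t ≥ ⨅ i, (Φ (f i) t - Φ (g i) t)) := by
  obtain ⟨σ, hσ, hσmax⟩ := exists_measurable_apply_eq_ciSup fun i => (hf i).1
  have hF : (fun s => ⨆ i, f i s) = fun s => f (σ s) s := funext fun s => (hσmax s).symm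
  refine ⟨fun t => g (σ t) t, BddBorelNN.apply_index hg hσ,
    fun t => le_ciSup (Finite.bddAbove_range fun i => |g i t|) (σ t), fun t => ?_, ?_⟩
  · rw [← hσmax t]
    exact le_ciSup (Finite.bddAbove_range fun i => |f i t - g i t|) (σ t)
  · rw [hF]
    filter_upwards [ae_apply_index_eq hΦind hσ hf (BddBorelNN.apply_index hf hσ),
      ae_apply_index_eq hΦind hσ hg (BddBorelNN.apply_index hg hσ)] with t hft hgt
    rw [hft, hgt]
    exact ciInf_le (Finite.bddBelow_range fun i => Φ (f i) t - Φ (g i) t) (σ t)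

/-- Lemma "ortogonalidad" (2): with `Φ` as before and `f = max_i fᵢ` pointwise, there is
`g` in the cone with `|g| ≤ max_i |gᵢ|`, `|f − g| ≤ max_i |fᵢ − gᵢ|` pointwise, and
`Φ(f) − Φ(g) ≥ min_i (Φ(fᵢ) − Φ(gᵢ))` almost everywhere. -/
theorem stmt4 {n : ℕ} (μ : Measure (Metric.sphere (0 : EuclideanSpace ℝ (Fin n)) 1))
    [IsFiniteMeasure μ]
    (Φ : (Metric.sphere (0 : EuclideanSpace ℝ (Fin n)) 1 → ℝ) →
      (Metric.sphere (0 : EuclideanSpace ℝ (Fin n)) 1 → ℝ))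
    (hΦL1 : ∀ f, BddBorelNN f → Integrable (Φ f) μ)
    (hΦind : ∀ f, BddBorelNN f → ∀ A, MeasurableSet A →
      Φ (Set.indicator A f) =ᵐ[μ] Set.indicator A (Φ f))
    (m : ℕ) (f g : Fin (m + 1) → Metric.sphere (0 : EuclideanSpace ℝ (Fin n)) 1 → ℝ)
    (hf : ∀ i, BddBorelNN (f i)) (hg : ∀ i, BddBorelNN (g i)) :
    ∃ g₀, BddBorelNN g₀ ∧
      (∀ t, |g₀ t| ≤ ⨆ i, |g i t|) ∧
      (∀ t, |(⨆ i, f i t) - g₀ t| ≤ ⨆ i, |f i t - g i t|) ∧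
      (∀ᵐ t ∂μ, Φ (fun s => ⨆ i, f i s) t - Φ g₀ t ≥ ⨅ i, (Φ (f i) t - Φ (g i) t)) :=
  stmt4_general μ Φ hΦind m f g hf hg
end

section
/- Let Ṽ : B(S^{n-1})₊ → ℝ be a continuous valuation with Ṽ(0) = 0, and let μ be a finite Borel measure on S^{n-1} such that the set functions ν_f(A) = Ṽ(f·χ_A) are countably additive and absolutely continuous with respect to μ for every f ∈ B(S^{n-1})₊. Then there exists a map Φ : B(S^{n-1})₊ → L¹(μ), continuous with respect to the sup norm on the domain and the L¹ norm on the codomain, such that Ṽ(f) = ∫_{S^{n-1}} Φ(f) dμ for every f ∈ B(S^{n-1})₊, and moreover Φ(f·χ_A) = Φ(f)·χ_A for every f ∈ B(S^{n-1})₊ and every Borel set A. -/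
/-!
For fixed `f`, the set function `A ↦ Ṽ(f χ_A)` is a signed measure absolutely continuous with
respect to `μ`, and `Φ(f)` is its Radon–Nikodym density. Then `Φ(f χ_A)` and `Φ(f) χ_A` have the
same integral `Ṽ(f χ_{A ∩ B})` over every Borel set `B`, hence agree a.e.

For continuity, the valuation identity applied to `f χ_A` and `g χ_{Aᶜ}` (whose minimum is `0`)
gives `Ṽ(f χ_A) - Ṽ(g χ_A) = Ṽ(h) - Ṽ(g)`, where `h` equals `f` on `A` and `g` off `A`. Both `g`
and `h` are uniformly as close to `f` as `g` is, so continuity of `Ṽ` at `f` bounds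
`|∫_A (Φ f - Φ g) dμ|` uniformly in `A`; splitting along the sign of `Φ f - Φ g` bounds the
`L¹` distance.
-/

open MeasureTheory
open scoped Classical

variable {α : Type*}

theorem abs_sub_piecewise_le {f g : α → ℝ} {δ : ℝ} (hfg : ∀ t, |f t - g t| ≤ δ) (A : Set α)
    (t : α) : |f t - A.piecewise f g t| ≤ δ := by
  by_cases ht : t ∈ A
  · simpa [ht] using (abs_nonneg _).trans (hfg t)
  · simpa [ht] using hfg t

variable [MeasurableSpace α]

namespace MeasureTheory.SignedMeasure

noncomputable def ofCountablyAdditive (m : Set α → ℝ) (hm₀ : m ∅ = 0)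
    (hm : ∀ A : ℕ → Set α, (∀ i, MeasurableSet (A i)) → Pairwise (Function.onFun Disjoint A) →
      HasSum (fun i => m (A i)) (m (⋃ i, A i))) : SignedMeasure α where
  measureOf' A := if MeasurableSet A then m A else 0
  empty' := by simp [hm₀]
  not_measurable' _ hA := if_neg hA
  m_iUnion' A hA hd := by
    simp only [hA, MeasurableSet.iUnion hA, if_true]
    exact hm A hA hd

theorem ofCountablyAdditive_apply {m : Set α → ℝ} {hm₀ : m ∅ = 0}
    {hm : ∀ A : ℕ → Set α, (∀ i, MeasurableSet (A i)) → Pairwise (Function.onFun Disjoint A) →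
      HasSum (fun i => m (A i)) (m (⋃ i, A i))} {A : Set α} (hA : MeasurableSet A) :
    ofCountablyAdditive m hm₀ hm A = m A :=
  if_pos hA

end MeasureTheory.SignedMeasure

theorem exists_integrable_setIntegral_eq_of_absolutelyContinuous {μ : Measure α} [SigmaFinite μ]
    (m : Set α → ℝ) (hm₀ : m ∅ = 0)
    (hm : ∀ A : ℕ → Set α, (∀ i, MeasurableSet (A i)) → Pairwise (Function.onFun Disjoint A) →
      HasSum (fun i => m (A i)) (m (⋃ i, A i)))
    (hac : ∀ A, MeasurableSet A → μ A = 0 → m A = 0) :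
    ∃ φ : α → ℝ, Integrable φ μ ∧ ∀ A, MeasurableSet A → ∫ t in A, φ t ∂μ = m A := by
  set s := SignedMeasure.ofCountablyAdditive m hm₀ hm
  have hs : s ≪ᵥ μ.toENNRealVectorMeasure := by
    refine VectorMeasure.AbsolutelyContinuous.mk fun A hA hμA => ?_
    rw [Measure.toENNRealVectorMeasure_apply_measurable hA] at hμA
    rw [SignedMeasure.ofCountablyAdditive_apply hA, hac A hA hμA]
  refine ⟨s.rnDeriv μ, SignedMeasure.integrable_rnDeriv s μ, fun A hA => ?_⟩
  rw [← withDensityᵥ_apply (SignedMeasure.integrable_rnDeriv s μ) hA,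
    SignedMeasure.withDensityᵥ_rnDeriv_eq s μ hs, SignedMeasure.ofCountablyAdditive_apply hA]

theorem integral_abs_le_of_forall_abs_setIntegral_le {μ : Measure α} {w : α → ℝ}
    (hw : Integrable w μ) {c : ℝ} (h : ∀ A, MeasurableSet A → |∫ t in A, w t ∂μ| ≤ c) :
    ∫ t, |w t| ∂μ ≤ 2 * c := by
  set P := {t | 0 ≤ hw.1.mk w t}
  have hP : MeasurableSet P :=
    measurableSet_le measurable_const hw.1.stronglyMeasurable_mk.measurable
  have hpos : ∫ t in P, |w t| ∂μ = ∫ t in P, w t ∂μ := by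
    refine setIntegral_congr_ae hP ?_
    filter_upwards [hw.1.ae_eq_mk] with t ht htP
    rw [abs_of_nonneg (ht ▸ htP)]
  have hneg : ∫ t in Pᶜ, |w t| ∂μ = -∫ t in Pᶜ, w t ∂μ := by
    rw [← integral_neg]
    refine setIntegral_congr_ae hP.compl ?_
    filter_upwards [hw.1.ae_eq_mk] with t ht htP
    exact abs_of_neg (ht ▸ not_le.1 htP)
  rw [← integral_add_compl hP hw.abs, hpos, hneg]
  linarith [abs_le.1 (h P hP), abs_le.1 (h Pᶜ hP.compl)]

def BddNonnegMeasurable (f : α → ℝ) : Prop :=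
  Measurable f ∧ (∃ C : ℝ, ∀ t, f t ≤ C) ∧ ∀ t, 0 ≤ f t

namespace BddNonnegMeasurable

theorem zero : BddNonnegMeasurable (0 : α → ℝ) :=
  ⟨measurable_const, ⟨0, fun _ => le_rfl⟩, fun _ => le_rfl⟩

theorem piecewise {f g : α → ℝ} (hf : BddNonnegMeasurable f) (hg : BddNonnegMeasurable g)
    {A : Set α} (hA : MeasurableSet A) : BddNonnegMeasurable (A.piecewise f g) := by
  obtain ⟨hfm, ⟨C, hC⟩, hf₀⟩ := hf
  obtain ⟨hgm, ⟨D, hD⟩, hg₀⟩ := hg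
  refine ⟨hfm.piecewise hA hgm, ⟨max C D, fun t => ?_⟩, fun t => ?_⟩ <;>
    by_cases ht : t ∈ A <;> simp [ht, hC t, hD t, hf₀ t, hg₀ t]

theorem indicator {f : α → ℝ} (hf : BddNonnegMeasurable f) {A : Set α}
    (hA : MeasurableSet A) : BddNonnegMeasurable (A.indicator f) := by
  simpa only [Set.piecewise_eq_indicator] using hf.piecewise zero hA

end BddNonnegMeasurable

section Valuation

variable {V : (α → ℝ) → ℝ} {f g : α → ℝ} {A : Set α}

theorem valuation_piecewise
    (hval : ∀ f g, BddNonnegMeasurable f → BddNonnegMeasurable g →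
      V (fun t => max (f t) (g t)) + V (fun t => min (f t) (g t)) = V f + V g)
    (hV0 : V 0 = 0) (hf : BddNonnegMeasurable f) (hg : BddNonnegMeasurable g)
    (hA : MeasurableSet A) :
    V (A.piecewise f g) = V (A.indicator f) + V (Aᶜ.indicator g) := by
  have hmax : (fun t => max (A.indicator f t) (Aᶜ.indicator g t)) = A.piecewise f g := by
    funext t
    by_cases ht : t ∈ A <;> simp [ht, hf.2.2 t, hg.2.2 t]
  have hmin : (fun t => min (A.indicator f t) (Aᶜ.indicator g t)) = 0 := by
    funext t
    by_cases ht : t ∈ A <;> simp [ht, hf.2.2 t, hg.2.2 t]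
  simpa [hmax, hmin, hV0] using hval _ _ (hf.indicator hA) (hg.indicator hA.compl)

theorem abs_valuation_indicator_sub_le
    (hval : ∀ f g, BddNonnegMeasurable f → BddNonnegMeasurable g →
      V (fun t => max (f t) (g t)) + V (fun t => min (f t) (g t)) = V f + V g)
    (hV0 : V 0 = 0) (hf : BddNonnegMeasurable f) (hg : BddNonnegMeasurable g)
    (hA : MeasurableSet A) :
    |V (A.indicator f) - V (A.indicator g)| ≤ |V f - V g| + |V f - V (A.piecewise f g)| := by
  have hfg := valuation_piecewise hval hV0 hf hg hA
  have hgg := valuation_piecewise hval hV0 hg hg hA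
  rw [Set.piecewise_same] at hgg
  calc |V (A.indicator f) - V (A.indicator g)|
      = |(V f - V g) - (V f - V (A.piecewise f g))| := by congr 1; linarith
    _ ≤ |V f - V g| + |V f - V (A.piecewise f g)| := abs_sub _ _

end Valuation

/-- Factorization of a continuous valuation through `L¹(μ)`: there is a continuous
`Φ : B(S^{n-1})₊ → L¹(μ)` with `Ṽ(f) = ∫ Φ(f) dμ` and `Φ(f χ_A) = Φ(f) χ_A`. -/
theorem stmt6 {n : ℕ} (μ : Measure (Metric.sphere (0 : EuclideanSpace ℝ (Fin n)) 1))
    [IsFiniteMeasure μ]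
    (V : (Metric.sphere (0 : EuclideanSpace ℝ (Fin n)) 1 → ℝ) → ℝ)
    (hval : ∀ f g, BddBorelNN f → BddBorelNN g →
      V (fun t => max (f t) (g t)) + V (fun t => min (f t) (g t)) = V f + V g)
    (hcont : ∀ f, BddBorelNN f → ∀ ε > (0:ℝ), ∃ δ > (0:ℝ), ∀ g, BddBorelNN g →
      (∀ t, |f t - g t| ≤ δ) → |V f - V g| ≤ ε)
    (hV0 : V 0 = 0)
    (hca : ∀ f, BddBorelNN f → ∀ A : ℕ → Set (Metric.sphere (0 : EuclideanSpace ℝ (Fin n)) 1),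
      (∀ i, MeasurableSet (A i)) → Pairwise (Function.onFun Disjoint A) →
      HasSum (fun i => V (Set.indicator (A i) f)) (V (Set.indicator (⋃ i, A i) f)))
    (hac : ∀ f, BddBorelNN f → ∀ A, MeasurableSet A → μ A = 0 → V (Set.indicator A f) = 0) :
    ∃ Φ : (Metric.sphere (0 : EuclideanSpace ℝ (Fin n)) 1 → ℝ) →
        (Metric.sphere (0 : EuclideanSpace ℝ (Fin n)) 1 → ℝ),
      (∀ f, BddBorelNN f → Integrable (Φ f) μ) ∧
      (∀ f, BddBorelNN f → ∀ ε > (0:ℝ), ∃ δ > (0:ℝ), ∀ g, BddBorelNN g →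
        (∀ t, |f t - g t| ≤ δ) → ∫ t, |Φ f t - Φ g t| ∂μ ≤ ε) ∧
      (∀ f, BddBorelNN f → V f = ∫ t, Φ f t ∂μ) ∧
      (∀ f, BddBorelNN f → ∀ A, MeasurableSet A →
        Φ (Set.indicator A f) =ᵐ[μ] Set.indicator A (Φ f)) := by
  have hdensity : ∀ f, BddBorelNN f → ∃ φ, Integrable φ μ ∧
      ∀ A, MeasurableSet A → ∫ t in A, φ t ∂μ = V (A.indicator f) := fun f hf =>
    exists_integrable_setIntegral_eq_of_absolutelyContinuous _
      (by rw [Set.indicator_empty']; exact hV0) (hca f hf) (hac f hf)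
  choose! Φ hΦint hΦset using hdensity
  refine ⟨Φ, hΦint, fun f hf ε hε => ?_, fun f hf => ?_, fun f hf A hA => ?_⟩
  · obtain ⟨δ, hδ, hVδ⟩ := hcont f hf (ε / 4) (by positivity)
    refine ⟨δ, hδ, fun g hg hfg => ?_⟩
    have hset : ∀ A, MeasurableSet A → |∫ t in A, (Φ f t - Φ g t) ∂μ| ≤ ε / 2 := by
      intro A hA
      rw [integral_sub (hΦint f hf).integrableOn (hΦint g hg).integrableOn, hΦset f hf A hA,
        hΦset g hg A hA]
      linarith [abs_valuation_indicator_sub_le hval hV0 hf hg hA, hVδ g hg hfg,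
        hVδ _ (BddNonnegMeasurable.piecewise hf hg hA) (abs_sub_piecewise_le hfg A)]
    linarith [integral_abs_le_of_forall_abs_setIntegral_le
      (w := fun t => Φ f t - Φ g t) ((hΦint f hf).sub (hΦint g hg)) hset]
  · rw [← setIntegral_univ, hΦset f hf _ MeasurableSet.univ, Set.indicator_univ]
  · have hfA : BddBorelNN (A.indicator f) := BddNonnegMeasurable.indicator hf hA
    refine (hΦint _ hfA).ae_eq_of_forall_setIntegral_eq _ _ ((hΦint f hf).indicator hA)
      fun B hB _ => ?_
    rw [hΦset _ hfA B hB, setIntegral_indicator hA, hΦset f hf _ (hB.inter hA),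
      Set.indicator_indicator]
end

section
/- Let μ be a finite Borel measure on S^{n-1} and K : ℝ₊ × S^{n-1} → ℝ a function such that: (a) K(s,·) is Borel measurable for each s ∈ ℝ₊, and K(·,t) is continuous for μ-almost every t; (b) for every λ ∈ ℝ₊ there is G_λ ∈ L¹(μ) with K(s,t) ≤ G_λ(t) for all s < λ and μ-almost every t; and (c) K(s,t) ≥ 0 for all s, t (or more generally |K(s,t)| ≤ G_λ(t) in (b)). Define V(f) = ∫_{S^{n-1}} K(f(t), t) dμ(t) for f ∈ B(S^{n-1})₊. Then V is a radial continuous valuation: V(f∨g) + V(f∧g) = V(f) + V(g) for all f, g ∈ B(S^{n-1})₊, and V is continuous with respect to the supremum norm. -/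
/-!
Continuity in `s` for almost every `t` upgrades the domination `|K s ·| ≤ G_λ`, given a.e. for
each `s < λ` separately, to a single a.e. bound valid for all `s < λ` at once (it suffices to
check it at the countably many rational `s`). Together with the Carathéodory measurability of
`t ↦ K (f t) t` this makes `V f` the integral of an integrable function for every bounded `f ≥ 0`.
The valuation identity then holds pointwise under the integral, and continuity in the supremum
norm is dominated convergence with the bound `G_λ` for `λ` just above `sup f`.
-/

open MeasureTheory Filter Topology

open Set

section CaratheodoryKernel

variable {α : Type*} [MeasurableSpace α] {μ : Measure α} {K : ℝ → α → ℝ}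

theorem ae_forall_abs_le_of_ae_continuousOn {G : α → ℝ} {lam : ℝ}
    (hcont : ∀ᵐ t ∂μ, ContinuousOn (fun s => K s t) (Ici 0))
    (hbound : ∀ s, 0 ≤ s → s < lam → ∀ᵐ t ∂μ, |K s t| ≤ G t) :
    ∀ᵐ t ∂μ, ∀ s, 0 ≤ s → s < lam → |K s t| ≤ G t := by
  set D := Ioo 0 lam ∩ range ((↑) : ℚ → ℝ)
  have hD : ∀ᵐ t ∂μ, ∀ q ∈ D, |K q t| ≤ G t :=
    (ae_ball_iff ((countable_range _).mono inter_subset_right)).mpr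
      fun q hq => hbound q hq.1.1.le hq.1.2
  filter_upwards [hcont, hD] with t hct hDt s hs hslam
  have hsD : s ∈ closure D := by
    refine closure_minimal (Rat.denseRange_cast.open_subset_closure_inter isOpen_Ioo)
      isClosed_closure ?_
    rw [closure_Ioo (hs.trans_lt hslam).ne]
    exact ⟨hs, hslam.le⟩
  have hKs : ContinuousWithinAt (fun s => |K s t|) D s :=
    ((hct s hs).mono fun q hq => mem_Ici.mpr hq.1.1.le).abs
  exact hKs.closure_le hsD continuousWithinAt_const hDt

theorem aestronglyMeasurable_comp_of_ae_continuousOn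
    (hmeas : ∀ s, 0 ≤ s → Measurable (K s))
    (hcont : ∀ᵐ t ∂μ, ContinuousOn (fun s => K s t) (Ici 0))
    {f : α → ℝ} (hf : Measurable f) (hf0 : ∀ t, 0 ≤ f t) :
    AEStronglyMeasurable (fun t => K (f t) t) μ := by
  obtain ⟨N, hbad, hN, hN0⟩ := exists_measurable_superset_of_null (ae_iff.mp hcont)
  -- A kernel continuous in `s` for every `t` and measurable in `t`, equal to `K` off `N` on `s ≥ 0`.
  set u : ℝ → α → ℝ := fun s => Nᶜ.indicator (K (max s 0))
  have hu : StronglyMeasurable (Function.uncurry u) := by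
    refine stronglyMeasurable_uncurry_of_continuous_of_stronglyMeasurable (fun t => ?_)
      fun s => ((hmeas _ (le_max_right s 0)).indicator hN.compl).stronglyMeasurable
    by_cases ht : t ∈ N
    · simpa only [u, indicator_of_notMem (notMem_compl_iff.mpr ht)] using continuous_const
    · simp only [u, indicator_of_mem (mem_compl ht)]
      exact (not_not.mp fun h => ht (hbad h)).comp_continuous
        (continuous_id.max continuous_const) fun s => le_max_right s 0
  refine ⟨fun t => Function.uncurry u (f t, t), hu.comp_measurable (hf.prodMk measurable_id), ?_⟩
  filter_upwards [measure_eq_zero_iff_ae_notMem.mp hN0] with t ht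
  simp only [Function.uncurry_apply_pair, u, indicator_of_mem (mem_compl ht), max_eq_left (hf0 t)]

theorem apply_max_add_apply_min {γ β : Type*} [LinearOrder γ] [AddCommMagma β] (φ : γ → β)
    (a b : γ) : φ (max a b) + φ (min a b) = φ a + φ b := by
  rcases le_total a b with h | h
  · rw [max_eq_right h, min_eq_left h, add_comm]
  · rw [max_eq_left h, min_eq_right h]

variable (μ K) in
/-- The strong Carathéodory condition on `[0, ∞) × α`, with a dominating integrable function
on each strip `[0, λ) × α`. -/
structure IsDominatedCaratheodory : Prop where
  measurable : ∀ s, 0 ≤ s → Measurable (K s)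
  ae_continuousOn : ∀ᵐ t ∂μ, ContinuousOn (fun s => K s t) (Ici 0)
  dominated : ∀ lam, 0 ≤ lam →
    ∃ G : α → ℝ, Integrable G μ ∧ ∀ s, 0 ≤ s → s < lam → ∀ᵐ t ∂μ, |K s t| ≤ G t

namespace IsDominatedCaratheodory

theorem exists_integrable_ae_forall_abs_le (hK : IsDominatedCaratheodory μ K) (lam : ℝ) :
    ∃ G : α → ℝ, Integrable G μ ∧ ∀ᵐ t ∂μ, ∀ s, 0 ≤ s → s < lam → |K s t| ≤ G t := by
  obtain ⟨G, hG, hbound⟩ := hK.dominated (max lam 0) (le_max_right _ _)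
  refine ⟨G, hG, ?_⟩
  filter_upwards [ae_forall_abs_le_of_ae_continuousOn hK.ae_continuousOn hbound] with t ht s hs hslam
  exact ht s hs (hslam.trans_le (le_max_left _ _))

theorem integrable_comp (hK : IsDominatedCaratheodory μ K) {f : α → ℝ} {C : ℝ}
    (hf : Measurable f) (hf0 : ∀ t, 0 ≤ f t) (hfC : ∀ t, f t ≤ C) :
    Integrable (fun t => K (f t) t) μ := by
  obtain ⟨G, hG, hGK⟩ := hK.exists_integrable_ae_forall_abs_le (C + 1)
  refine hG.mono' (aestronglyMeasurable_comp_of_ae_continuousOn hK.measurable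
    hK.ae_continuousOn hf hf0) ?_
  filter_upwards [hGK] with t ht
  exact ht (f t) (hf0 t) (by linarith [hfC t])

theorem integral_comp_max_add_integral_comp_min (hK : IsDominatedCaratheodory μ K)
    {f g : α → ℝ} {Cf Cg : ℝ} (hf : Measurable f) (hf0 : ∀ t, 0 ≤ f t) (hfC : ∀ t, f t ≤ Cf)
    (hg : Measurable g) (hg0 : ∀ t, 0 ≤ g t) (hgC : ∀ t, g t ≤ Cg) :
    (∫ t, K (max (f t) (g t)) t ∂μ) + (∫ t, K (min (f t) (g t)) t ∂μ) =
      (∫ t, K (f t) t ∂μ) + (∫ t, K (g t) t ∂μ) := by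
  rw [← integral_add (hK.integrable_comp (hf.max hg) (fun t => (hf0 t).trans (le_max_left _ _))
      fun t => max_le_max (hfC t) (hgC t)),
    ← integral_add (hK.integrable_comp hf hf0 hfC) (hK.integrable_comp hg hg0 hgC)]
  · exact integral_congr_ae (ae_of_all _ fun t => apply_max_add_apply_min (K · t) (f t) (g t))
  · exact hK.integrable_comp (hf.min hg) (fun t => le_min (hf0 t) (hg0 t))
      fun t => (min_le_left _ _).trans (hfC t)

theorem tendsto_integral_comp_of_tendstoUniformly (hK : IsDominatedCaratheodory μ K)
    {ι : Type*} {l : Filter ι} [l.IsCountablyGenerated] {f : α → ℝ} {g : ι → α → ℝ} {C : ℝ}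
    (hf0 : ∀ t, 0 ≤ f t) (hfC : ∀ t, f t ≤ C) (hg : ∀ i, Measurable (g i))
    (hg0 : ∀ i t, 0 ≤ g i t) (hgf : TendstoUniformly g f l) :
    Tendsto (fun i => ∫ t, K (g i t) t ∂μ) l (𝓝 (∫ t, K (f t) t ∂μ)) := by
  obtain ⟨G, hG, hGK⟩ := hK.exists_integrable_ae_forall_abs_le (C + 1)
  refine tendsto_integral_filter_of_dominated_convergence G
    (Eventually.of_forall fun i => aestronglyMeasurable_comp_of_ae_continuousOn hK.measurable
      hK.ae_continuousOn (hg i) (hg0 i)) ?_ hG ?_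
  · filter_upwards [Metric.tendstoUniformly_iff.mp hgf 1 one_pos] with i hi
    filter_upwards [hGK] with t ht
    have hit := hi t
    rw [Real.dist_eq, abs_lt] at hit
    exact ht (g i t) (hg0 i t) (by linarith [hfC t])
  · filter_upwards [hK.ae_continuousOn] with t ht
    exact (ht (f t) (hf0 t)).tendsto.comp
      (tendsto_nhdsWithin_iff.mpr ⟨hgf.tendsto_at t, Eventually.of_forall fun i => hg0 i t⟩)

theorem exists_pos_forall_abs_integral_comp_sub_le (hK : IsDominatedCaratheodory μ K)
    {f : α → ℝ} {C : ℝ} (hf0 : ∀ t, 0 ≤ f t) (hfC : ∀ t, f t ≤ C) {ε : ℝ} (hε : 0 < ε) :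
    ∃ δ > 0, ∀ g : α → ℝ, Measurable g → (∀ t, 0 ≤ g t) → (∀ t, |f t - g t| ≤ δ) →
      |(∫ t, K (f t) t ∂μ) - (∫ t, K (g t) t ∂μ)| ≤ ε := by
  by_contra! h
  choose g hg hg0 hgf hgε using fun m : ℕ => h (1 / (m + 1)) Nat.one_div_pos_of_nat
  have hunif : TendstoUniformly g f atTop := by
    refine Metric.tendstoUniformly_iff.mpr fun δ hδ => ?_
    filter_upwards [tendsto_one_div_add_atTop_nhds_zero_nat.eventually (gt_mem_nhds hδ)]
      with m hm t
    exact (hgf m t).trans_lt hm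
  obtain ⟨m, hm⟩ := ((hK.tendsto_integral_comp_of_tendstoUniformly hf0 hfC hg hg0 hunif).eventually
    (Metric.closedBall_mem_nhds _ hε)).exists
  rw [Real.dist_eq, abs_sub_comm] at hm
  exact (hgε m).not_ge hm

end IsDominatedCaratheodory

end CaratheodoryKernel

theorem stmt7_general {n : ℕ} (μ : Measure (Metric.sphere (0 : EuclideanSpace ℝ (Fin n)) 1))
    (K : ℝ → Metric.sphere (0 : EuclideanSpace ℝ (Fin n)) 1 → ℝ)
    (hmeas : ∀ s : ℝ, 0 ≤ s → Measurable (K s))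
    (hcont : ∀ᵐ t ∂μ, ContinuousOn (fun s => K s t) (Set.Ici (0:ℝ)))
    (hdom : ∀ lam : ℝ, 0 ≤ lam →
      ∃ G : Metric.sphere (0 : EuclideanSpace ℝ (Fin n)) 1 → ℝ, Integrable G μ ∧
        ∀ s : ℝ, 0 ≤ s → s < lam → ∀ᵐ t ∂μ, |K s t| ≤ G t) :
    (∀ f g, BddBorelNN f → BddBorelNN g →
      (∫ t, K (max (f t) (g t)) t ∂μ) + (∫ t, K (min (f t) (g t)) t ∂μ) =
        (∫ t, K (f t) t ∂μ) + (∫ t, K (g t) t ∂μ)) ∧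
    (∀ f, BddBorelNN f → ∀ ε > (0:ℝ), ∃ δ > (0:ℝ), ∀ g, BddBorelNN g →
      (∀ t, |f t - g t| ≤ δ) →
      |(∫ t, K (f t) t ∂μ) - (∫ t, K (g t) t ∂μ)| ≤ ε) := by
  have hK : IsDominatedCaratheodory μ K := ⟨hmeas, hcont, hdom⟩
  refine ⟨?_, ?_⟩
  · rintro f g ⟨hf, ⟨Cf, hfC⟩, hf0⟩ ⟨hg, ⟨Cg, hgC⟩, hg0⟩
    exact hK.integral_comp_max_add_integral_comp_min hf hf0 hfC hg hg0 hgC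
  · rintro f ⟨-, ⟨C, hfC⟩, hf0⟩ ε hε
    obtain ⟨δ, hδ, hfδ⟩ := hK.exists_pos_forall_abs_integral_comp_sub_le hf0 hfC hε
    exact ⟨δ, hδ, fun g hg => hfδ g hg.1 hg.2.2⟩

/-- An integral kernel satisfying the strong Carathéodory condition and the domination
condition defines a radial continuous valuation `V(f) = ∫ K(f(t),t) dμ(t)`. -/
theorem stmt7 {n : ℕ} (μ : Measure (Metric.sphere (0 : EuclideanSpace ℝ (Fin n)) 1))
    [IsFiniteMeasure μ]
    (K : ℝ → Metric.sphere (0 : EuclideanSpace ℝ (Fin n)) 1 → ℝ)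
    (hmeas : ∀ s : ℝ, 0 ≤ s → Measurable (K s))
    (hcont : ∀ᵐ t ∂μ, ContinuousOn (fun s => K s t) (Set.Ici (0:ℝ)))
    (hdom : ∀ lam : ℝ, 0 ≤ lam →
      ∃ G : Metric.sphere (0 : EuclideanSpace ℝ (Fin n)) 1 → ℝ, Integrable G μ ∧
        ∀ s : ℝ, 0 ≤ s → s < lam → ∀ᵐ t ∂μ, |K s t| ≤ G t) :
    (∀ f g, BddBorelNN f → BddBorelNN g →
      (∫ t, K (max (f t) (g t)) t ∂μ) + (∫ t, K (min (f t) (g t)) t ∂μ) =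
        (∫ t, K (f t) t ∂μ) + (∫ t, K (g t) t ∂μ)) ∧
    (∀ f, BddBorelNN f → ∀ ε > (0:ℝ), ∃ δ > (0:ℝ), ∀ g, BddBorelNN g →
      (∀ t, |f t - g t| ≤ δ) →
      |(∫ t, K (f t) t ∂μ) - (∫ t, K (g t) t ∂μ)| ≤ ε) :=
  stmt7_general μ K hmeas hcont hdom
end

section
/- Let V : C(S^{n-1})₊ → ℝ be a valuation (V(f∨g)+V(f∧g)=V(f)+V(g)) with bounded variation. Then for all f, g, h ∈ C(S^{n-1})₊ with f ≤ g ≤ h, the variation is additive: |V|([f,h]) = |V|([f,g]) + |V|([g,h]). -/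
/-!
A chain from `f` to `h` passing through `g` is the concatenation of a chain from `f` to `g` and
one from `g` to `h`, which gives `≥`. Conversely, cutting a chain `(c k)` from `f` to `h` by `g`
produces the chains `(c k ⊓ g)` from `f` to `g` and `(c k ⊔ g)` from `g` to `h`; the valuation
identity splits every increment `V (c (k+1)) - V (c k)` into the corresponding increments of
these two chains, which gives `≤`.
-/

open MeasureTheory Filter Topology

variable {n : ℕ}

/-- The set of chain sums `Σ |V(f_k) − V(f_{k−1})|` over finite increasing chains
`f = f_0 ≤ f_1 ≤ ⋯ ≤ f_m = g` in `C(S^{n-1})₊`. -/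
def chainSums (V : C(Metric.sphere (0 : EuclideanSpace ℝ (Fin n)) 1, ℝ) → ℝ)
    (f g : C(Metric.sphere (0 : EuclideanSpace ℝ (Fin n)) 1, ℝ)) : Set ℝ :=
  {x | ∃ (m : ℕ) (c : ℕ → C(Metric.sphere (0 : EuclideanSpace ℝ (Fin n)) 1, ℝ)),
    c 0 = f ∧ c m = g ∧ (∀ k < m, c k ≤ c (k+1)) ∧ (∀ k ≤ m, 0 ≤ c k) ∧
    x = ∑ k ∈ Finset.range m, |V (c (k+1)) - V (c k)|}

/-- The variation `|V|([f,g])` of `V` on the order interval `[f,g]`. -/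
noncomputable def variation (V : C(Metric.sphere (0 : EuclideanSpace ℝ (Fin n)) 1, ℝ) → ℝ)
    (f g : C(Metric.sphere (0 : EuclideanSpace ℝ (Fin n)) 1, ℝ)) : ℝ :=
  sSup (chainSums V f g)

lemma abs_sub_le_abs_sub_inf_add_abs_sub_sup {α : Type*} [Lattice α] (V : α → ℝ) {u v g : α}
    (hu : V (u ⊔ g) + V (u ⊓ g) = V u + V g) (hv : V (v ⊔ g) + V (v ⊓ g) = V v + V g) :
    |V v - V u| ≤ |V (v ⊓ g) - V (u ⊓ g)| + |V (v ⊔ g) - V (u ⊔ g)| := by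
  have hsplit : V v - V u = (V (v ⊓ g) - V (u ⊓ g)) + (V (v ⊔ g) - V (u ⊔ g)) := by linarith
  rw [hsplit]
  exact abs_add_le _ _

local notation "F" => C(Metric.sphere (0 : EuclideanSpace ℝ (Fin n)) 1, ℝ)

lemma abs_sub_mem_chainSums {V : F → ℝ} {f g : F} (hf : 0 ≤ f) (hfg : f ≤ g) :
    |V g - V f| ∈ chainSums V f g := by
  refine ⟨1, fun k => if k = 0 then f else g, rfl, rfl, ?_, ?_, by simp⟩
  · intro k hk
    obtain rfl : k = 0 := by omega
    simpa using hfg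
  · intro k _
    dsimp only
    split
    · exact hf
    · exact hf.trans hfg

lemma map_sum_mem_chainSums {V : F → ℝ} {f h : F} {m : ℕ} {c : ℕ → F}
    (hc0 : c 0 = f) (hcm : c m = h) (hmono : ∀ k < m, c k ≤ c (k+1))
    (hpos : ∀ k ≤ m, 0 ≤ c k) {φ : F → F} (hφ : Monotone φ)
    (hφpos : ∀ u, 0 ≤ u → 0 ≤ φ u) :
    ∑ k ∈ Finset.range m, |V (φ (c (k+1))) - V (φ (c k))| ∈ chainSums V (φ f) (φ h) :=
  ⟨m, φ ∘ c, congrArg φ hc0, congrArg φ hcm, fun k hk => hφ (hmono k hk),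
    fun k hk => hφpos _ (hpos k hk), rfl⟩

lemma add_mem_chainSums {V : F → ℝ} {f g h : F} {a b : ℝ}
    (ha : a ∈ chainSums V f g) (hb : b ∈ chainSums V g h) : a + b ∈ chainSums V f h := by
  obtain ⟨m₁, c₁, h₁0, h₁m, h₁mono, h₁pos, rfl⟩ := ha
  obtain ⟨m₂, c₂, h₂0, h₂m, h₂mono, h₂pos, rfl⟩ := hb
  set c : ℕ → F := fun k => if k ≤ m₁ then c₁ k else c₂ (k - m₁)
  have hlo : ∀ k ≤ m₁, c k = c₁ k := fun k hk => if_pos hk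
  have hhi : ∀ k, m₁ ≤ k → c k = c₂ (k - m₁) := by
    intro k hk
    rcases hk.eq_or_lt with rfl | hlt
    · simp [c, h₁m, h₂0]
    · exact if_neg (not_le.mpr hlt)
  refine ⟨m₁ + m₂, c, (hlo 0 m₁.zero_le).trans h₁0, ?_, ?_, ?_, ?_⟩
  · rw [hhi _ (Nat.le_add_right _ _), Nat.add_sub_cancel_left, h₂m]
  · intro k hk
    rcases lt_or_ge k m₁ with hk₁ | hk₁
    · rw [hlo k hk₁.le, hlo (k+1) hk₁]
      exact h₁mono k hk₁
    · rw [hhi k hk₁, hhi (k+1) (by omega), show k + 1 - m₁ = k - m₁ + 1 by omega]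
      exact h₂mono _ (by omega)
  · intro k hk
    rcases le_or_gt k m₁ with hk₁ | hk₁
    · rw [hlo k hk₁]; exact h₁pos k hk₁
    · rw [hhi k hk₁.le]; exact h₂pos _ (by omega)
  · rw [Finset.sum_range_add]
    congr 1
    · refine Finset.sum_congr rfl fun k hk => ?_
      rw [Finset.mem_range] at hk
      rw [hlo k hk.le, hlo (k+1) hk]
    · refine Finset.sum_congr rfl fun k _ => ?_
      rw [hhi (m₁ + k) (by omega), hhi (m₁ + k + 1) (by omega),
        show m₁ + k - m₁ = k by omega, show m₁ + k + 1 - m₁ = k + 1 by omega]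

lemma variation_le_add {V : F → ℝ}
    (hval : ∀ f g, 0 ≤ f → 0 ≤ g → V (f ⊔ g) + V (f ⊓ g) = V f + V g) {f g h : F}
    (hf : 0 ≤ f) (hfg : f ≤ g) (hgh : g ≤ h)
    (bdd_fg : BddAbove (chainSums V f g)) (bdd_gh : BddAbove (chainSums V g h)) :
    variation V f h ≤ variation V f g + variation V g h := by
  have hg : 0 ≤ g := hf.trans hfg
  refine csSup_le ⟨_, abs_sub_mem_chainSums hf (hfg.trans hgh)⟩ ?_
  rintro _ ⟨m, c, hc0, hcm, hmono, hpos, rfl⟩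
  have hinf := map_sum_mem_chainSums (V := V) hc0 hcm hmono hpos (φ := (· ⊓ g))
    (fun _ _ huv => inf_le_inf_right g huv) (fun _ hu => le_inf hu hg)
  have hsup := map_sum_mem_chainSums (V := V) hc0 hcm hmono hpos (φ := (· ⊔ g))
    (fun _ _ huv => sup_le_sup_right huv g) (fun _ _ => hg.trans le_sup_right)
  simp only [inf_eq_left.mpr hfg, inf_eq_right.mpr hgh, sup_eq_right.mpr hfg,
    sup_eq_left.mpr hgh] at hinf hsup
  calc ∑ k ∈ Finset.range m, |V (c (k+1)) - V (c k)|
      ≤ ∑ k ∈ Finset.range m,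
          (|V (c (k+1) ⊓ g) - V (c k ⊓ g)| + |V (c (k+1) ⊔ g) - V (c k ⊔ g)|) :=
        Finset.sum_le_sum fun k hk => abs_sub_le_abs_sub_inf_add_abs_sub_sup V
          (hval _ _ (hpos k (Finset.mem_range.mp hk).le) hg)
          (hval _ _ (hpos (k+1) (Finset.mem_range.mp hk)) hg)
    _ ≤ variation V f g + variation V g h := by
        rw [Finset.sum_add_distrib]
        exact add_le_add (le_csSup bdd_fg hinf) (le_csSup bdd_gh hsup)

lemma add_variation_le {V : F → ℝ} {f g h : F} (hf : 0 ≤ f) (hfg : f ≤ g) (hgh : g ≤ h)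
    (bdd_fg : BddAbove (chainSums V f g)) (bdd_gh : BddAbove (chainSums V g h))
    (bdd_fh : BddAbove (chainSums V f h)) :
    variation V f g + variation V g h ≤ variation V f h := by
  have ne_fg : (chainSums V f g).Nonempty := ⟨_, abs_sub_mem_chainSums hf hfg⟩
  have ne_gh : (chainSums V g h).Nonempty := ⟨_, abs_sub_mem_chainSums (hf.trans hfg) hgh⟩
  rw [variation, variation, ← csSup_add ne_fg bdd_fg ne_gh bdd_gh]
  exact csSup_le_csSup bdd_fh (ne_fg.add ne_gh)
    (Set.add_subset_iff.mpr fun _ ha _ hb => add_mem_chainSums ha hb)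

/-- Additivity of the variation: `|V|([f,h]) = |V|([f,g]) + |V|([g,h])` for `f ≤ g ≤ h`. -/
theorem stmt8 (V : C(Metric.sphere (0 : EuclideanSpace ℝ (Fin n)) 1, ℝ) → ℝ)
    (hval : ∀ f g, 0 ≤ f → 0 ≤ g → V (f ⊔ g) + V (f ⊓ g) = V f + V g)
    (hbv : ∀ f g, 0 ≤ f → f ≤ g → BddAbove (chainSums V f g))
    (f g h : C(Metric.sphere (0 : EuclideanSpace ℝ (Fin n)) 1, ℝ))
    (hf : 0 ≤ f) (hfg : f ≤ g) (hgh : g ≤ h) :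
    variation V f h = variation V f g + variation V g h := by
  have bdd_fg := hbv f g hf hfg
  have bdd_gh := hbv g h (hf.trans hfg) hgh
  exact le_antisymm (variation_le_add hval hf hfg hgh bdd_fg bdd_gh)
    (add_variation_le hf hfg hgh bdd_fg bdd_gh (hbv f h hf (hfg.trans hgh)))
end

section
/- Let V : C(S^{n-1})₊ → ℝ be a valuation with bounded variation, and define |V|(f) = |V|([0,f]). Then |V| : C(S^{n-1})₊ → ℝ is itself a valuation: |V|(f∨g) + |V|(f∧g) = |V|(f) + |V|(g) for all f, g ∈ C(S^{n-1})₊. -/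
/-!
Splitting a chain from `a` to `c` at an intermediate `b` (taking `⊓ b` and `⊔ b` of each link)
does not decrease the chain sum, because the valuation identity splits every increment
`V(u') - V(u)` into the increments of `u ↦ u ⊓ b` and `u ↦ u ⊔ b`; concatenation gives the
converse, so the variation is additive on adjacent intervals. Moreover `u ↦ u ⊔ g` and
`u ↦ u ⊓ f` are mutually inverse order isomorphisms between `[f ⊓ g, f]` and `[g, f ⊔ g]` that
shift `V` by a constant, so these two intervals have the same variation. Subtracting
`|V|(f) = |V|(f ⊓ g) + |V|([f ⊓ g, f])` from `|V|(f ⊔ g) = |V|(g) + |V|([g, f ⊔ g])` gives the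
valuation identity for `|V|`.
-/

open MeasureTheory Filter Topology

variable {n : ℕ}

open scoped Pointwise

section Sequences

variable {α : Type*}

lemma monotoneOn_Iic_of_le_succ [Preorder α] {c : ℕ → α} {m : ℕ}
    (h : ∀ k < m, c k ≤ c (k + 1)) : MonotoneOn c (Set.Iic m) :=
  monotoneOn_of_le_succ Set.ordConnected_Iic fun k _ _ hk ↦ by
    simpa using h k (Order.succ_le_iff.mp hk)

def seqAppend (c₁ c₂ : ℕ → α) (m : ℕ) (k : ℕ) : α :=
  if k ≤ m then c₁ k else c₂ (k - m)

lemma seqAppend_of_le {c₁ c₂ : ℕ → α} {m k : ℕ} (hk : k ≤ m) : seqAppend c₁ c₂ m k = c₁ k :=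
  if_pos hk

lemma seqAppend_add {c₁ c₂ : ℕ → α} {m : ℕ} (h : c₁ m = c₂ 0) (k : ℕ) :
    seqAppend c₁ c₂ m (m + k) = c₂ k := by
  rcases k.eq_zero_or_pos with rfl | hk
  · simp [seqAppend, h]
  · simp [seqAppend, hk.ne']

end Sequences

abbrev SphereFn (n : ℕ) := C(Metric.sphere (0 : EuclideanSpace ℝ (Fin n)) 1, ℝ)

def IsValuationOnNonneg (V : SphereFn n → ℝ) : Prop :=
  ∀ f g, 0 ≤ f → 0 ≤ g → V (f ⊔ g) + V (f ⊓ g) = V f + V g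

section ChainSums

variable {V : SphereFn n → ℝ}

lemma chainSums_nonempty {f g : SphereFn n} (hf : 0 ≤ f) (hfg : f ≤ g) :
    (chainSums V f g).Nonempty := by
  refine ⟨|V g - V f|, 1, fun k ↦ if k = 0 then f else g, by simp, by simp, ?_, ?_, by simp⟩
  · intro k hk
    obtain rfl : k = 0 := by omega
    simpa using hfg
  · intro k _
    dsimp only
    split_ifs
    exacts [hf, hf.trans hfg]

lemma chainSums_add_subset (a b c : SphereFn n) :
    chainSums V a b + chainSums V b c ⊆ chainSums V a c := by
  rintro _ ⟨_, ⟨m₁, c₁, h₁0, h₁m, h₁mono, h₁pos, rfl⟩, _,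
    ⟨m₂, c₂, h₂0, h₂m, h₂mono, h₂pos, rfl⟩, rfl⟩
  have hjoin : c₁ m₁ = c₂ 0 := h₁m.trans h₂0.symm
  refine ⟨m₁ + m₂, seqAppend c₁ c₂ m₁, by simp [seqAppend_of_le, h₁0],
    by rw [seqAppend_add hjoin, h₂m], fun k hk ↦ ?_, fun k hk ↦ ?_, ?_⟩
  · rcases lt_or_ge k m₁ with hk₁ | hk₁
    · rw [seqAppend_of_le hk₁.le, seqAppend_of_le hk₁]
      exact h₁mono k hk₁
    · obtain ⟨j, rfl⟩ := Nat.exists_eq_add_of_le hk₁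
      rw [seqAppend_add hjoin, add_assoc, seqAppend_add hjoin]
      exact h₂mono j (by omega)
  · rcases le_or_gt k m₁ with hk₁ | hk₁
    · rw [seqAppend_of_le hk₁]
      exact h₁pos k hk₁
    · obtain ⟨j, rfl⟩ := Nat.exists_eq_add_of_le hk₁.le
      rw [seqAppend_add hjoin]
      exact h₂pos j (by omega)
  · rw [Finset.sum_range_add]
    congr 1
    · refine Finset.sum_congr rfl fun k hk ↦ ?_
      rw [Finset.mem_range] at hk
      rw [seqAppend_of_le hk, seqAppend_of_le hk.le]
    · refine Finset.sum_congr rfl fun k _ ↦ ?_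
      rw [add_assoc, seqAppend_add hjoin, seqAppend_add hjoin]

lemma abs_sub_le_of_isValuationOnNonneg (hV : IsValuationOnNonneg V) {u u' b : SphereFn n}
    (hu : 0 ≤ u) (hu' : 0 ≤ u') (hb : 0 ≤ b) :
    |V u' - V u| ≤ |V (u' ⊓ b) - V (u ⊓ b)| + |V (u' ⊔ b) - V (u ⊔ b)| := by
  have hsplit : V u' - V u = (V (u' ⊓ b) - V (u ⊓ b)) + (V (u' ⊔ b) - V (u ⊔ b)) := by
    linarith [hV u' b hu' hb, hV u b hu hb]
  exact hsplit ▸ abs_add_le _ _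

lemma exists_chainSums_add_ge (hV : IsValuationOnNonneg V) {a b c : SphereFn n}
    (ha : 0 ≤ a) (hab : a ≤ b) (hbc : b ≤ c) {x : ℝ} (hx : x ∈ chainSums V a c) :
    ∃ y ∈ chainSums V a b + chainSums V b c, x ≤ y := by
  obtain ⟨m, ch, h0, hm, hmono, hpos, rfl⟩ := hx
  have hb : 0 ≤ b := ha.trans hab
  refine ⟨_, ⟨_, ⟨m, fun k ↦ ch k ⊓ b, by simp [h0, hab], by simp [hm, hbc],
      fun k hk ↦ inf_le_inf_right _ (hmono k hk), fun k hk ↦ le_inf (hpos k hk) hb, rfl⟩,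
    _, ⟨m, fun k ↦ ch k ⊔ b, by simp [h0, hab], by simp [hm, hbc],
      fun k hk ↦ sup_le_sup_right (hmono k hk) _, fun k _ ↦ hb.trans le_sup_right, rfl⟩, rfl⟩, ?_⟩
  dsimp only
  rw [← Finset.sum_add_distrib]
  refine Finset.sum_le_sum fun k hk ↦ ?_
  rw [Finset.mem_range] at hk
  exact abs_sub_le_of_isValuationOnNonneg hV (hpos k hk.le) (hpos (k + 1) hk) hb

lemma variation_add_variation (hV : IsValuationOnNonneg V) {a b c : SphereFn n}
    (ha : 0 ≤ a) (hab : a ≤ b) (hbc : b ≤ c)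
    (hab_bdd : BddAbove (chainSums V a b)) (hbc_bdd : BddAbove (chainSums V b c)) :
    variation V a b + variation V b c = variation V a c := by
  have hsup : sSup (chainSums V a b + chainSums V b c) = variation V a c :=
    csSup_eq_csSup_of_forall_exists_le (fun y hy ↦ ⟨y, chainSums_add_subset a b c hy, le_rfl⟩)
      (fun _ hx ↦ exists_chainSums_add_ge hV ha hab hbc hx)
  rw [← hsup, csSup_add (chainSums_nonempty ha hab) hab_bdd
    (chainSums_nonempty (ha.trans hab) hbc) hbc_bdd]
  rfl

lemma chainSums_subset_of_shift {a b a' b' : SphereFn n} (φ : SphereFn n → SphereFn n)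
    (hφa : φ a = a') (hφb : φ b = b') (hφ : Monotone φ)
    (hφ_nonneg : ∀ u ∈ Set.Icc a b, 0 ≤ φ u) (t : ℝ)
    (hshift : ∀ u ∈ Set.Icc a b, V (φ u) = V u + t) :
    chainSums V a b ⊆ chainSums V a' b' := by
  rintro _ ⟨m, ch, h0, hm, hmono, hpos, rfl⟩
  have hmem : ∀ k ≤ m, ch k ∈ Set.Icc a b := fun k hk ↦ by
    have hc := monotoneOn_Iic_of_le_succ hmono
    refine ⟨h0 ▸ hc (Set.mem_Iic.2 (Nat.zero_le m)) hk (Nat.zero_le k),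
      hm ▸ hc hk (Set.mem_Iic.2 le_rfl) hk⟩
  refine ⟨m, φ ∘ ch, by simp [h0, hφa], by simp [hm, hφb], fun k hk ↦ hφ (hmono k hk),
    fun k hk ↦ hφ_nonneg _ (hmem k hk), Finset.sum_congr rfl fun k hk ↦ ?_⟩
  rw [Finset.mem_range] at hk
  simp only [Function.comp_apply, hshift _ (hmem k hk.le), hshift _ (hmem (k + 1) hk),
    add_sub_add_right_eq_sub]

lemma chainSums_inf_eq_chainSums_sup (hV : IsValuationOnNonneg V) {f g : SphereFn n}
    (hf : 0 ≤ f) (hg : 0 ≤ g) : chainSums V (f ⊓ g) f = chainSums V g (f ⊔ g) := by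
  apply (chainSums_subset_of_shift (· ⊔ g) (by simp) rfl (fun _ _ h ↦ sup_le_sup_right h _)
    (fun _ _ ↦ hg.trans le_sup_right) (V g - V (f ⊓ g)) ?_).antisymm
  · refine chainSums_subset_of_shift (· ⊓ f) (by simp [inf_comm]) (by simp)
      (fun _ _ h ↦ inf_le_inf_right _ h) (fun u hu ↦ le_inf (hg.trans hu.1) hf)
      (V f - V (f ⊔ g)) fun u hu ↦ ?_
    have hsup : u ⊔ f = f ⊔ g :=
      le_antisymm (sup_le hu.2 le_sup_left) (sup_le le_sup_right (hu.1.trans le_sup_left))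
    linarith [hsup ▸ hV u f (hg.trans hu.1) hf]
  · intro u hu
    have hinf : u ⊓ g = f ⊓ g := le_antisymm (inf_le_inf_right _ hu.2) (le_inf hu.1 inf_le_right)
    linarith [hinf ▸ hV u g ((le_inf hf hg).trans hu.1) hg]

end ChainSums

/-- The variation function `|V|(f) = |V|([0,f])` of a valuation of bounded variation is
itself a valuation on `C(S^{n-1})₊`. -/
theorem stmt9 (V : C(Metric.sphere (0 : EuclideanSpace ℝ (Fin n)) 1, ℝ) → ℝ)
    (hval : ∀ f g, 0 ≤ f → 0 ≤ g → V (f ⊔ g) + V (f ⊓ g) = V f + V g)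
    (hbv : ∀ f g, 0 ≤ f → f ≤ g → BddAbove (chainSums V f g))
    (f g : C(Metric.sphere (0 : EuclideanSpace ℝ (Fin n)) 1, ℝ))
    (hf : 0 ≤ f) (hg : 0 ≤ g) :
    variation V 0 (f ⊔ g) + variation V 0 (f ⊓ g) = variation V 0 f + variation V 0 g := by
  have hfg : 0 ≤ f ⊓ g := le_inf hf hg
  have hsup : variation V 0 g + variation V g (f ⊔ g) = variation V 0 (f ⊔ g) :=
    variation_add_variation hval le_rfl hg le_sup_right (hbv 0 g le_rfl hg)
      (hbv g _ hg le_sup_right)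
  have hinf : variation V 0 (f ⊓ g) + variation V (f ⊓ g) f = variation V 0 f :=
    variation_add_variation hval le_rfl hfg inf_le_left (hbv 0 _ le_rfl hfg)
      (hbv _ f hfg inf_le_left)
  have hshift : variation V (f ⊓ g) f = variation V g (f ⊔ g) :=
    congrArg sSup (chainSums_inf_eq_chainSums_sup hval hf hg)
  linarith
end

section
/- Let Ṽ : B(S^{n-1})₊ → ℝ be a valuation that is continuous and bounded on bounded sets, and suppose Ṽ(f) = ∫ Φ(f) dμ for a continuous map Φ : B(S^{n-1})₊ → L¹(μ) satisfying Φ(f·χ_A) = Φ(f)·χ_A, where μ is a finite Borel measure controlling Ṽ. If (f_n), (g_n) are sequences in the unit ball of B(S^{n-1})₊ with ‖f_n − g_n‖_∞ → 0, then Φ(f_n)(t) − Φ(g_n)(t) → 0 for μ-almost every t ∈ S^{n-1}. -/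
/-! If `Φ(fₖ) - Φ(gₖ) ≥ s > 0` infinitely often on a set `F` of positive measure, choose
measurably, for `t ∈ F` and every `N`, an index `K_N(t) ≥ N` with
`Φ(f_{K_N(t)})(t) - Φ(g_{K_N(t)})(t) ≥ s` such that `f_{K_N(t)}(t)` converges (to a limsup).
Pasting `f_{K_N(t)}` and `g_{K_N(t)}` over `F` gives bounded Borel functions `u_N`, `w_N` with a
common pointwise limit, so `Ṽ(u_N) - Ṽ(w_N) → 0` because `μ` controls `Ṽ`. But by orthogonal
additivity `Φ(u_N) - Φ(w_N)` is `≥ s` on `F` and vanishes off `F`, so `Ṽ(u_N) - Ṽ(w_N) ≥ s μ(F)`. -/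

open MeasureTheory Filter Topology

section IndexSelection

variable {α : Type*}

theorem frequently_mem_and_abs_sub_limsup_indicator_lt {a : ℕ → ℝ} {S : Set ℕ} {C : ℝ}
    (ha0 : ∀ k, 0 ≤ a k) (haC : ∀ k, a k ≤ C) (hS : ∃ᶠ k in atTop, k ∈ S) {d : ℝ} (hd : 0 < d) :
    ∃ᶠ k in atTop, k ∈ S ∧ |a k - limsup (S.indicator a) atTop| < d := by
  set e := limsup (S.indicator a) atTop
  have hbdd : IsBoundedUnder (· ≤ ·) atTop (S.indicator a) :=
    isBoundedUnder_of ⟨C, fun k => (Set.indicator_le_self' fun k _ => ha0 k) k |>.trans (haC k)⟩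
  have hlow : ∃ᶠ k in atTop, k ∈ S ∧ e - d < a k := by
    rcases lt_or_ge (e - d) 0 with hneg | hnonneg
    · exact hS.mono fun k hk => ⟨hk, hneg.trans_le (ha0 k)⟩
    · -- a value of the indicator above `e - d ≥ 0` can only come from an index in `S`
      refine (frequently_lt_of_lt_limsup (isCoboundedUnder_le_of_le atTop
        fun k => Set.indicator_nonneg (fun k _ => ha0 k) k) (sub_lt_self e hd)).mono fun k hk => ?_
      have hkS : k ∈ S := by
        by_contra hkS
        rw [Set.indicator_of_notMem hkS] at hk
        linarith
      exact ⟨hkS, by rwa [Set.indicator_of_mem hkS] at hk⟩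
  refine (hlow.and_eventually (eventually_lt_of_limsup_lt (lt_add_of_pos_right e hd) hbdd)).mono ?_
  rintro k ⟨⟨hkS, hk⟩, hk'⟩
  rw [Set.indicator_of_mem hkS] at hk'
  exact ⟨hkS, abs_sub_lt_iff.2 ⟨by linarith, by linarith⟩⟩

theorem exists_measurable_index_tendsto [MeasurableSpace α] {a : ℕ → α → ℝ} {S : ℕ → Set α}
    {C : ℝ} (ha : ∀ k, Measurable (a k)) (hS : ∀ k, MeasurableSet (S k))
    (ha0 : ∀ k t, 0 ≤ a k t) (haC : ∀ k t, a k t ≤ C) (hfreq : ∀ t, ∃ᶠ k in atTop, t ∈ S k) :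
    ∃ K : ℕ → α → ℕ, (∀ N, Measurable (K N)) ∧ (∀ N t, N ≤ K N t ∧ t ∈ S (K N t)) ∧
      ∃ e : α → ℝ, ∀ t, Tendsto (fun N => a (K N t) t) atTop (𝓝 (e t)) := by
  classical
  set e : α → ℝ := fun t => limsup (fun k => (S k).indicator (a k) t) atTop
  have he : Measurable e := Measurable.limsup fun k => (ha k).indicator (hS k)
  set P : ℕ → α → ℕ → Prop := fun N t k => N ≤ k ∧ t ∈ S k ∧ |a k t - e t| < 1 / ((N : ℝ) + 1)
  have hP : ∀ N t, ∃ k, P N t k := fun N t =>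
    (frequently_mem_and_abs_sub_limsup_indicator_lt (S := {k | t ∈ S k}) (fun k => ha0 k t)
      (fun k => haC k t) (hfreq t) Nat.one_div_pos_of_nat).forall_exists_of_atTop N
  have hPm : ∀ N k, MeasurableSet {t | P N t k} := fun N k =>
    (MeasurableSet.const _).inter <| (hS k).inter <|
      measurableSet_lt ((ha k).sub he).abs measurable_const
  refine ⟨fun N t => Nat.find (hP N t), fun N => measurable_find _ (hPm N),
    fun N t => ⟨(Nat.find_spec (hP N t)).1, (Nat.find_spec (hP N t)).2.1⟩, e, fun t => ?_⟩
  rw [tendsto_iff_norm_sub_tendsto_zero]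
  exact squeeze_zero (fun _ => norm_nonneg _)
    (fun N => (Nat.find_spec (hP N t)).2.2.le) tendsto_one_div_add_atTop_nhds_zero_nat

theorem tendsto_apply_index_of_tendsto_sub {a b : ℕ → ℝ} {K : ℕ → ℕ} {e : ℝ}
    (hK : ∀ N, N ≤ K N) (ha : Tendsto (fun N => a (K N)) atTop (𝓝 e))
    (hab : Tendsto (fun k => a k - b k) atTop (𝓝 0)) : Tendsto (fun N => b (K N)) atTop (𝓝 e) := by
  simpa only [Function.comp_def, sub_sub_cancel, sub_zero] using
    ha.sub (hab.comp (tendsto_atTop_mono hK tendsto_id))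

theorem indicator_apply_index_le {f : ℕ → α → ℝ} {C : ℝ}
    (hfC : ∀ k t, f k t ≤ C) (F : Set α) (K : α → ℕ) (t : α) :
    F.indicator (fun t => f (K t) t) t ≤ max C 0 :=
  Set.indicator_apply_le' (fun _ => (hfC _ t).trans (le_max_left _ _)) fun _ => le_max_right _ _

end IndexSelection

def OrthogonallyAdditive {α : Type*} [MeasurableSpace α] (μ : Measure α)
    (P : (α → ℝ) → Prop) (Φ : (α → ℝ) → α → ℝ) : Prop :=
  ∀ f, P f → ∀ A, MeasurableSet A → Φ (A.indicator f) =ᵐ[μ] A.indicator (Φ f)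

namespace OrthogonallyAdditive

variable {α : Type*} [MeasurableSpace α] {μ : Measure α} {P : (α → ℝ) → Prop}
  {Φ : (α → ℝ) → α → ℝ}

theorem ae_eq_of_eqOn (hΦ : OrthogonallyAdditive μ P Φ) {x y : α → ℝ} (hx : P x) (hy : P y)
    {A : Set α} (hA : MeasurableSet A) (hxy : Set.EqOn x y A) :
    ∀ᵐ t ∂μ, t ∈ A → Φ x t = Φ y t := by
  filter_upwards [hΦ x hx A hA, hΦ y hy A hA] with t hxt hyt htA
  rw [← Set.indicator_of_mem htA (Φ x), ← hxt, Set.indicator_congr hxy, hyt,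
    Set.indicator_of_mem htA]

theorem ae_apply_index (hΦ : OrthogonallyAdditive μ P Φ) {x : ℕ → α → ℝ} (hx : ∀ k, P (x k))
    {K : α → ℕ} (hK : Measurable K) {u : α → ℝ} (hu : P u) {A : Set α} (hA : MeasurableSet A)
    (hux : ∀ t ∈ A, u t = x (K t) t) :
    ∀ᵐ t ∂μ, t ∈ A → Φ u t = Φ (x (K t)) t := by
  have hpiece : ∀ k, ∀ᵐ t ∂μ, t ∈ A ∩ K ⁻¹' {k} → Φ u t = Φ (x k) t := fun k =>
    hΦ.ae_eq_of_eqOn hu (hx k) (hA.inter (hK (measurableSet_singleton k)))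
      fun t ht => by rw [hux t ht.1, ht.2]
  filter_upwards [ae_all_iff.2 hpiece] with t ht htA using ht (K t) ⟨htA, rfl⟩

end OrthogonallyAdditive

local notation "𝕊" n:max => Metric.sphere (0 : EuclideanSpace ℝ (Fin n)) 1

namespace BddBorelNN

variable {n : ℕ}

theorem indicator_apply_index {f : ℕ → 𝕊 n → ℝ} {C : ℝ} (hf : ∀ k, BddBorelNN (f k))
    (hfC : ∀ k t, f k t ≤ C) {K : 𝕊 n → ℕ} (hK : Measurable K) {F : Set (𝕊 n)}
    (hF : MeasurableSet F) : BddBorelNN (F.indicator fun t => f (K t) t) :=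
  ⟨((measurable_from_prod_countable_left (f := fun p : 𝕊 n × ℕ => f p.2 p.1)
      fun k => (hf k).1).comp (measurable_id.prodMk hK)).indicator hF,
    ⟨max C 0, indicator_apply_index_le hfC F K⟩,
    fun t => Set.indicator_nonneg (fun t _ => (hf _).2.2 t) t⟩

theorem of_tendsto {u : ℕ → 𝕊 n → ℝ} {L : 𝕊 n → ℝ} {C : ℝ} (hu : ∀ N, BddBorelNN (u N))
    (huC : ∀ N t, u N t ≤ C) (hL : ∀ t, Tendsto (fun N => u N t) atTop (𝓝 (L t))) :
    BddBorelNN L :=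
  ⟨measurable_of_tendsto_metrizable (fun N => (hu N).1) (tendsto_pi_nhds.2 hL),
    ⟨C, fun t => le_of_tendsto' (hL t) fun N => huC N t⟩,
    fun t => ge_of_tendsto' (hL t) fun N => (hu N).2.2 t⟩

end BddBorelNN

section Sphere

variable {n : ℕ} {μ : Measure (𝕊 n)} [IsFiniteMeasure μ] {Φ : (𝕊 n → ℝ) → 𝕊 n → ℝ}

theorem mul_le_integral_sub_indicator_apply_index (hΦ : OrthogonallyAdditive μ BddBorelNN Φ)
    (hΦL1 : ∀ f, BddBorelNN f → Integrable (Φ f) μ) {f g : ℕ → 𝕊 n → ℝ}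
    (hf : ∀ k, BddBorelNN (f k)) (hg : ∀ k, BddBorelNN (g k)) {K : 𝕊 n → ℕ} (hK : Measurable K)
    {F : Set (𝕊 n)} (hF : MeasurableSet F) (hu : BddBorelNN (F.indicator fun t => f (K t) t))
    (hw : BddBorelNN (F.indicator fun t => g (K t) t)) {s : ℝ}
    (hs : ∀ᵐ t ∂μ, t ∈ F → s ≤ Φ (f (K t)) t - Φ (g (K t)) t) :
    μ.real F * s ≤ ∫ t, Φ (F.indicator fun t => f (K t) t) t -
      Φ (F.indicator fun t => g (K t) t) t ∂μ := by
  rw [← smul_eq_mul, ← integral_indicator_const s hF]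
  refine integral_mono_ae ((integrable_const s).indicator hF) ((hΦL1 _ hu).sub (hΦL1 _ hw)) ?_
  have hoff : Set.EqOn (F.indicator fun t => f (K t) t) (F.indicator fun t => g (K t) t) Fᶜ :=
    fun t ht => by simp only [Set.indicator_of_notMem ht]
  filter_upwards [hΦ.ae_apply_index hf hK hu hF fun t ht => Set.indicator_of_mem ht _,
    hΦ.ae_apply_index hg hK hw hF fun t ht => Set.indicator_of_mem ht _,
    hΦ.ae_eq_of_eqOn hu hw hF.compl hoff, hs] with t hut hwt hoff' hst
  by_cases ht : t ∈ F
  · rw [Set.indicator_of_mem ht, hut ht, hwt ht]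
    exact hst ht
  · rw [Set.indicator_of_notMem ht, hoff' ht, sub_self]

theorem measure_limsup_le_eq_zero (V : (𝕊 n → ℝ) → ℝ)
    (hμV : ∀ (f : ℕ → 𝕊 n → ℝ) (flim : 𝕊 n → ℝ) (lam : ℝ),
      (∀ k, BddBorelNN (f k)) → BddBorelNN flim → (∀ k t, f k t ≤ lam) →
      (∀ᵐ t ∂μ, Tendsto (fun k => f k t) atTop (𝓝 (flim t))) →
      Tendsto (fun k => V (f k)) atTop (𝓝 (V flim)))
    (hΦL1 : ∀ f, BddBorelNN f → Integrable (Φ f) μ) (hΦV : ∀ f, BddBorelNN f → V f = ∫ t, Φ f t ∂μ)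
    (hΦ : OrthogonallyAdditive μ BddBorelNN Φ) {f g : ℕ → 𝕊 n → ℝ}
    (hf : ∀ k, BddBorelNN (f k)) (hg : ∀ k, BddBorelNN (g k)) {C : ℝ} (hfC : ∀ k t, f k t ≤ C)
    (hgC : ∀ k t, g k t ≤ C) (hfg : ∀ᵐ t ∂μ, Tendsto (fun k => f k t - g k t) atTop (𝓝 0))
    {h : ℕ → 𝕊 n → ℝ} (hh : ∀ k, Measurable (h k))
    (hΦh : ∀ k, (fun t => Φ (f k) t - Φ (g k) t) =ᵐ[μ] h k) {s : ℝ} (hs : 0 < s) :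
    μ (limsup (fun k => {t | s ≤ h k t}) atTop) = 0 := by
  set F := limsup (fun k => {t | s ≤ h k t}) atTop
  have hS : ∀ k, MeasurableSet {t | s ≤ h k t} := fun k => measurableSet_le measurable_const (hh k)
  have hF : MeasurableSet F := .measurableSet_limsup hS
  by_contra hF0
  obtain ⟨K, hKm, hK, e, he⟩ := exists_measurable_index_tendsto (S := fun k => {t | s ≤ h k t} ∪ Fᶜ)
    (fun k => (hf k).1) (fun k => (hS k).union hF.compl)
    (fun k t => (hf k).2.2 t) hfC fun t => by
      by_cases ht : t ∈ F
      · exact (mem_limsup_iff_frequently_mem.1 ht).mono fun k hk => Or.inl hk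
      · exact Frequently.of_forall fun k => Or.inr ht
  set u : ℕ → 𝕊 n → ℝ := fun N => F.indicator fun t => f (K N t) t
  set w : ℕ → 𝕊 n → ℝ := fun N => F.indicator fun t => g (K N t) t
  have hu : ∀ N, BddBorelNN (u N) := fun N => .indicator_apply_index hf hfC (hKm N) hF
  have hw : ∀ N, BddBorelNN (w N) := fun N => .indicator_apply_index hg hgC (hKm N) hF
  have hu_lim : ∀ t, Tendsto (fun N => u N t) atTop (𝓝 (F.indicator e t)) := fun t => by
    by_cases ht : t ∈ F
    · simpa only [u, Set.indicator_of_mem ht] using he t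
    · simpa only [u, Set.indicator_of_notMem ht] using tendsto_const_nhds
  have hw_lim : ∀ᵐ t ∂μ, Tendsto (fun N => w N t) atTop (𝓝 (F.indicator e t)) := by
    filter_upwards [hfg] with t hfgt
    by_cases ht : t ∈ F
    · simpa only [w, Set.indicator_of_mem ht] using
        tendsto_apply_index_of_tendsto_sub (fun N => (hK N t).1) (he t) hfgt
    · simpa only [w, Set.indicator_of_notMem ht] using tendsto_const_nhds
  have hL : BddBorelNN (F.indicator e) :=
    .of_tendsto hu (fun N => indicator_apply_index_le hfC F (K N)) hu_lim
  have hgap : ∀ N, μ.real F * s ≤ V (u N) - V (w N) := fun N => by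
    rw [hΦV _ (hu N), hΦV _ (hw N), ← integral_sub (hΦL1 _ (hu N)) (hΦL1 _ (hw N))]
    refine mul_le_integral_sub_indicator_apply_index hΦ hΦL1 hf hg (hKm N) hF (hu N) (hw N) ?_
    filter_upwards [ae_all_iff.2 hΦh] with t ht htF
    rw [ht]
    exact (hK N t).2.resolve_right (not_not.2 htF)
  have hlim : Tendsto (fun N => V (u N) - V (w N)) atTop (𝓝 0) := by
    simpa using (hμV u _ _ hu hL (fun N => indicator_apply_index_le hfC F (K N))
      (ae_of_all _ hu_lim)).sub
      (hμV w _ _ hw hL (fun N => indicator_apply_index_le hgC F (K N)) hw_lim)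
  have hpos : 0 < μ.real F * s :=
    mul_pos (ENNReal.toReal_pos hF0 (measure_ne_top μ F)) hs
  linarith [ge_of_tendsto' hlim hgap]

theorem ae_eventually_sub_lt (V : (𝕊 n → ℝ) → ℝ)
    (hμV : ∀ (f : ℕ → 𝕊 n → ℝ) (flim : 𝕊 n → ℝ) (lam : ℝ),
      (∀ k, BddBorelNN (f k)) → BddBorelNN flim → (∀ k t, f k t ≤ lam) →
      (∀ᵐ t ∂μ, Tendsto (fun k => f k t) atTop (𝓝 (flim t))) →
      Tendsto (fun k => V (f k)) atTop (𝓝 (V flim)))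
    (hΦL1 : ∀ f, BddBorelNN f → Integrable (Φ f) μ) (hΦV : ∀ f, BddBorelNN f → V f = ∫ t, Φ f t ∂μ)
    (hΦ : OrthogonallyAdditive μ BddBorelNN Φ) {f g : ℕ → 𝕊 n → ℝ}
    (hf : ∀ k, BddBorelNN (f k)) (hg : ∀ k, BddBorelNN (g k)) {C : ℝ} (hfC : ∀ k t, f k t ≤ C)
    (hgC : ∀ k t, g k t ≤ C) (hfg : ∀ᵐ t ∂μ, Tendsto (fun k => f k t - g k t) atTop (𝓝 0))
    {s : ℝ} (hs : 0 < s) :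
    ∀ᵐ t ∂μ, ∀ᶠ k in atTop, Φ (f k) t - Φ (g k) t < s := by
  have hm : ∀ k, AEMeasurable (fun t => Φ (f k) t - Φ (g k) t) μ := fun k =>
    ((hΦL1 _ (hf k)).sub (hΦL1 _ (hg k))).aemeasurable
  have hnull := measure_limsup_le_eq_zero V hμV hΦL1 hΦV hΦ hf hg hfC hgC hfg
    (fun k => (hm k).measurable_mk) (fun k => (hm k).ae_eq_mk) hs
  filter_upwards [measure_eq_zero_iff_ae_notMem.1 hnull, ae_all_iff.2 fun k => (hm k).ae_eq_mk]
    with t ht hmt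
  rw [mem_limsup_iff_frequently_mem, not_frequently] at ht
  exact ht.mono fun k hk => (hmt k).trans_lt (not_le.1 hk)

end Sphere

theorem stmt15_general {n : ℕ} (μ : Measure (Metric.sphere (0 : EuclideanSpace ℝ (Fin n)) 1))
    [IsFiniteMeasure μ]
    (V : (Metric.sphere (0 : EuclideanSpace ℝ (Fin n)) 1 → ℝ) → ℝ)
    (hμctrl : ∀ (f : ℕ → Metric.sphere (0 : EuclideanSpace ℝ (Fin n)) 1 → ℝ)
        (flim : Metric.sphere (0 : EuclideanSpace ℝ (Fin n)) 1 → ℝ) (lam : ℝ),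
      (∀ k, BddBorelNN (f k)) → BddBorelNN flim → (∀ k t, f k t ≤ lam) →
      (∀ᵐ t ∂μ, Tendsto (fun k => f k t) atTop (𝓝 (flim t))) →
      Tendsto (fun k => V (f k)) atTop (𝓝 (V flim)))
    (Φ : (Metric.sphere (0 : EuclideanSpace ℝ (Fin n)) 1 → ℝ) →
      (Metric.sphere (0 : EuclideanSpace ℝ (Fin n)) 1 → ℝ))
    (hΦL1 : ∀ f, BddBorelNN f → Integrable (Φ f) μ)
    (hΦrep : ∀ f, BddBorelNN f → V f = ∫ t, Φ f t ∂μ)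
    (hΦind : ∀ f, BddBorelNN f → ∀ A, MeasurableSet A →
      Φ (Set.indicator A f) =ᵐ[μ] Set.indicator A (Φ f))
    (f g : ℕ → Metric.sphere (0 : EuclideanSpace ℝ (Fin n)) 1 → ℝ)
    (hf : ∀ k, BddBorelNN (f k)) (hg : ∀ k, BddBorelNN (g k))
    (hf1 : ∀ k t, f k t ≤ 1) (hg1 : ∀ k t, g k t ≤ 1)
    (hconv : ∀ ε > (0:ℝ), ∃ N : ℕ, ∀ k ≥ N, ∀ t, |f k t - g k t| ≤ ε) :
    ∀ᵐ t ∂μ, Tendsto (fun k => Φ (f k) t - Φ (g k) t) atTop (𝓝 0) := by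
  have hfg : ∀ t, Tendsto (fun k => f k t - g k t) atTop (𝓝 0) := fun t =>
    Metric.tendsto_atTop.2 fun ε hε =>
      let ⟨N, hN⟩ := hconv (ε / 2) (half_pos hε)
      ⟨N, fun k hk => by rw [Real.dist_eq, sub_zero]; linarith [hN k hk t]⟩
  have hgf : ∀ t, Tendsto (fun k => g k t - f k t) atTop (𝓝 0) := fun t => by
    simpa using (hfg t).neg
  have hsmall : ∀ m : ℕ, ∀ᵐ t ∂μ, ∀ᶠ k in atTop,
      |Φ (f k) t - Φ (g k) t| < 1 / ((m : ℝ) + 1) := fun m => by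
    filter_upwards [ae_eventually_sub_lt V hμctrl hΦL1 hΦrep hΦind hf hg hf1 hg1
        (ae_of_all _ hfg) Nat.one_div_pos_of_nat,
      ae_eventually_sub_lt V hμctrl hΦL1 hΦrep hΦind hg hf hg1 hf1
        (ae_of_all _ hgf) Nat.one_div_pos_of_nat] with t hfgt hgft
    filter_upwards [hfgt, hgft] with k h₁ h₂ using abs_sub_lt_iff.2 ⟨h₁, h₂⟩
  filter_upwards [ae_all_iff.2 hsmall] with t ht
  exact Metric.nhds_basis_ball_inv_nat_succ.tendsto_right_iff.2 fun m _ => by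
    simpa only [Metric.mem_ball, Real.dist_eq, sub_zero] using ht m

/-- If `Ṽ(f) = ∫ Φ(f) dμ` with `Φ` orthogonally additive and continuous, `Ṽ` a continuous
valuation bounded on bounded sets with `μ` controlling `Ṽ`, then for sequences `(fₙ), (gₙ)`
in the unit ball of `B(S^{n-1})₊` with `‖fₙ − gₙ‖_∞ → 0` we have
`Φ(fₙ)(t) − Φ(gₙ)(t) → 0` for μ-almost every `t`. -/
theorem stmt15 {n : ℕ} (μ : Measure (Metric.sphere (0 : EuclideanSpace ℝ (Fin n)) 1))
    [IsFiniteMeasure μ]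
    (V : (Metric.sphere (0 : EuclideanSpace ℝ (Fin n)) 1 → ℝ) → ℝ)
    (hval : ∀ f g, BddBorelNN f → BddBorelNN g →
      V (fun t => max (f t) (g t)) + V (fun t => min (f t) (g t)) = V f + V g)
    (hcont : ∀ f, BddBorelNN f → ∀ ε > (0:ℝ), ∃ δ > (0:ℝ), ∀ g, BddBorelNN g →
      (∀ t, |f t - g t| ≤ δ) → |V f - V g| ≤ ε)
    (hbdd : ∀ lam : ℝ, 0 < lam → ∃ M : ℝ, ∀ f, BddBorelNN f → (∀ t, f t ≤ lam) → |V f| ≤ M)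
    (hμctrl : ∀ (f : ℕ → Metric.sphere (0 : EuclideanSpace ℝ (Fin n)) 1 → ℝ)
        (flim : Metric.sphere (0 : EuclideanSpace ℝ (Fin n)) 1 → ℝ) (lam : ℝ),
      (∀ k, BddBorelNN (f k)) → BddBorelNN flim → (∀ k t, f k t ≤ lam) →
      (∀ᵐ t ∂μ, Tendsto (fun k => f k t) atTop (𝓝 (flim t))) →
      Tendsto (fun k => V (f k)) atTop (𝓝 (V flim)))
    (Φ : (Metric.sphere (0 : EuclideanSpace ℝ (Fin n)) 1 → ℝ) →
      (Metric.sphere (0 : EuclideanSpace ℝ (Fin n)) 1 → ℝ))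
    (hΦL1 : ∀ f, BddBorelNN f → Integrable (Φ f) μ)
    (hΦrep : ∀ f, BddBorelNN f → V f = ∫ t, Φ f t ∂μ)
    (hΦind : ∀ f, BddBorelNN f → ∀ A, MeasurableSet A →
      Φ (Set.indicator A f) =ᵐ[μ] Set.indicator A (Φ f))
    (hΦcont : ∀ f, BddBorelNN f → ∀ ε > (0:ℝ), ∃ δ > (0:ℝ), ∀ g, BddBorelNN g →
      (∀ t, |f t - g t| ≤ δ) → ∫ t, |Φ f t - Φ g t| ∂μ ≤ ε)
    (f g : ℕ → Metric.sphere (0 : EuclideanSpace ℝ (Fin n)) 1 → ℝ)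
    (hf : ∀ k, BddBorelNN (f k)) (hg : ∀ k, BddBorelNN (g k))
    (hf1 : ∀ k t, f k t ≤ 1) (hg1 : ∀ k t, g k t ≤ 1)
    (hconv : ∀ ε > (0:ℝ), ∃ N : ℕ, ∀ k ≥ N, ∀ t, |f k t - g k t| ≤ ε) :
    ∀ᵐ t ∂μ, Tendsto (fun k => Φ (f k) t - Φ (g k) t) atTop (𝓝 0) :=
  stmt15_general μ V hμctrl Φ hΦL1 hΦrep hΦind f g hf hg hf1 hg1 hconv
end

section
/- Let (f_n) ⊂ L¹(Ω, Σ, μ) with μ(Ω) < ∞ and sup_n ‖f_n‖_{L¹} < ∞. Then there exist a subsequence (f_{n_k}) and a sequence of pairwise disjoint measurable sets (A_k) such that the sequence (f_{n_k}·χ_{A_kᶜ}) is uniformly integrable. -/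
/-!
Let `a n j = ∫_{‖f n‖ ≥ j} ‖f n‖`, `S j = limsup_n a n j` and `α = inf_j S j`. Along a diagonal
subsequence with `a (n k) j ≤ S j + o(1)` for `j ≤ k` and `a (n k) k ≥ α - o(1)`, the mass of
`f (n k)` between a fixed level `J` and the level `k` is at most `S J - α + o(1)`, which is small
for `J` large; hence the truncations `f (n k) · 1{‖f (n k)‖ < k}` are uniformly integrable.
By Markov's inequality the sets `E k = {‖f (n k)‖ ≥ k}` have measure `O(1/k)`, so after thinning
the subsequence the union of all later `E j` carries almost none of the mass of `f (n k)`.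
Then the sets `A k = E k \ ⋃_{j > k} E j` are disjoint, and `f (n k) 1_{A kᶜ}` is the truncation
plus a sequence tending to `0` in `L¹`.
-/

open MeasureTheory Filter Topology Function
open scoped NNReal ENNReal

theorem pairwise_disjoint_sdiff_iUnion_gt {α : Type*} (s : ℕ → Set α) :
    Pairwise (Disjoint on fun i => s i \ ⋃ j > i, s j) := by
  refine (pairwise_disjoint_on _).2 fun i j hij => Set.disjoint_left.2 fun x hxi hxj => ?_
  exact hxi.2 (Set.mem_biUnion hij hxj.1)

theorem exists_strictMono_rel_succ_of_eventually {R : ℕ → ℕ → Prop}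
    (h : ∀ m, ∀ᶠ n in atTop, R m n) : ∃ ψ : ℕ → ℕ, StrictMono ψ ∧ ∀ j, R (ψ j) (ψ (j + 1)) := by
  choose N hN using fun m => ((h m).and (eventually_gt_atTop m)).exists
  refine ⟨fun j => N^[j] 0, strictMono_nat_of_lt_succ fun j => ?_, fun j => ?_⟩
  · simpa only [iterate_succ_apply'] using (hN _).2
  · simpa only [iterate_succ_apply'] using (hN _).1

theorem exists_strictMono_eventually_le_diag_add {a : ℕ → ℕ → ℝ} {C : ℝ}
    (h0 : ∀ n j, 0 ≤ a n j) (hC : ∀ n j, a n j ≤ C) :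
    ∃ φ : ℕ → ℕ, StrictMono φ ∧ ∀ ε > 0, ∃ J, ∀ᶠ k in atTop, a (φ k) J ≤ a (φ k) k + ε := by
  set S : ℕ → ℝ := fun j => limsup (fun n => a n j) atTop
  have hbdd (j : ℕ) : IsBoundedUnder (· ≤ ·) atTop (fun n => a n j) :=
    isBoundedUnder_of ⟨C, fun n => hC n j⟩
  have hcobdd (j : ℕ) : IsCoboundedUnder (· ≤ ·) atTop (fun n => a n j) :=
    isCoboundedUnder_le_of_le atTop fun n => h0 n j
  have hS : BddBelow (Set.range S) :=
    ⟨0, Set.forall_mem_range.2 fun j =>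
      le_limsup_of_frequently_le (Frequently.of_forall fun n => h0 n j) (hbdd j)⟩
  set α := ⨅ j, S j
  set η : ℕ → ℝ := fun k => 1 / ((k : ℝ) + 1)
  have hη : Tendsto η atTop (𝓝 0) := tendsto_one_div_add_atTop_nhds_zero_nat
  have hfreq (k : ℕ) :
      ∃ᶠ n in atTop, (∀ j ∈ Finset.range (k + 1), a n j < S j + η k) ∧ α - η k < a n k := by
    have hηk : 0 < η k := Nat.one_div_pos_of_nat
    refine Eventually.and_frequently ?_ (frequently_lt_of_lt_limsup (hcobdd k) ?_)
    · exact (eventually_all_finset _).2 fun j _ =>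
        eventually_lt_of_limsup_lt (lt_add_of_pos_right _ hηk) (hbdd j)
    · exact (sub_lt_self α hηk).trans_le (ciInf_le hS k)
  obtain ⟨φ, hφ, hφa⟩ := extraction_forall_of_frequently hfreq
  refine ⟨φ, hφ, fun ε hε => ?_⟩
  obtain ⟨J, hJ⟩ := exists_lt_of_ciInf_lt (lt_add_of_pos_right α (half_pos hε))
  have hsmall : ∀ᶠ k in atTop, η k < ε / 4 := (tendsto_order.1 hη).2 _ (by positivity)
  refine ⟨J, ?_⟩
  filter_upwards [hsmall, eventually_ge_atTop J] with k hk hJk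
  have h1 := (hφa k).1 J (Finset.mem_range.2 (Nat.lt_succ_of_le hJk))
  have h2 := (hφa k).2
  linarith

section

variable {Ω E : Type*} [MeasurableSpace Ω] {μ : Measure Ω} [NormedAddCommGroup E]

theorem indicator_nnnorm_ge_indicator_compl {α : Type*} (g : α → E) (t : Set α) (c : ℝ≥0) :
    {x | c ≤ ‖tᶜ.indicator g x‖₊}.indicator (tᶜ.indicator g) =
      ({x | c ≤ ‖g x‖₊} \ t).indicator g := by
  ext x
  by_cases hx : x ∈ t <;> simp [Set.indicator, hx]

theorem eLpNorm_one_indicator_eq_ofReal_setIntegral_norm {g : Ω → E} (hg : Integrable g μ)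
    {s : Set Ω} (hs : MeasurableSet s) :
    eLpNorm (s.indicator g) 1 μ = ENNReal.ofReal (∫ x in s, ‖g x‖ ∂μ) := by
  rw [eLpNorm_indicator_eq_eLpNorm_restrict hs, eLpNorm_one_eq_lintegral_enorm,
    ofReal_integral_norm_eq_lintegral_enorm hg.restrict]

theorem MeasureTheory.UnifIntegrable.comp {ι κ : Type*} {f : ι → Ω → E} {p : ℝ≥0∞}
    (hf : UnifIntegrable f p μ) (u : κ → ι) : UnifIntegrable (f ∘ u) p μ := fun _ hε =>
  let ⟨δ, hδ, h⟩ := hf hε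
  ⟨δ, hδ, fun i => h (u i)⟩

theorem MeasureTheory.UnifIntegrable.exists_setIntegral_norm_lt {ι : Type*} {f : ι → Ω → E}
    (hui : UnifIntegrable f 1 μ) (hf : ∀ i, Integrable (f i) μ) {ε : ℝ} (hε : 0 < ε) :
    ∃ δ > 0, ∀ i s, MeasurableSet s → μ s < ENNReal.ofReal δ → ∫ x in s, ‖f i x‖ ∂μ < ε := by
  obtain ⟨δ, hδ, h⟩ := hui (half_pos hε)
  refine ⟨δ, hδ, fun i s hs hμs => ?_⟩
  have hi := h i s hs hμs.le
  rw [eLpNorm_one_indicator_eq_ofReal_setIntegral_norm (hf i) hs,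
    ENNReal.ofReal_le_ofReal_iff (half_pos hε).le] at hi
  linarith

theorem tendsto_measure_natCast_le_nnnorm {g : ℕ → Ω → E} (hg : ∀ n, Integrable (g n) μ)
    {C : ℝ} (hC : ∀ n, ∫ x, ‖g n x‖ ∂μ ≤ C) :
    Tendsto (fun k : ℕ => μ {x | (k : ℝ≥0) ≤ ‖g k x‖₊}) atTop (𝓝 0) := by
  have hmarkov : ∀ᶠ k : ℕ in atTop,
      μ {x | (k : ℝ≥0) ≤ ‖g k x‖₊} ≤ ENNReal.ofReal C * (k : ℝ≥0∞)⁻¹ := by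
    filter_upwards [eventually_ge_atTop 1] with k hk
    have h := meas_ge_le_lintegral_div (hg k).1.enorm (ε := k) (by positivity)
      (ENNReal.natCast_ne_top k)
    rw [← ofReal_integral_norm_eq_lintegral_enorm (hg k), div_eq_mul_inv] at h
    refine le_trans (le_of_eq ?_) (h.trans (by gcongr; exact hC k))
    congr 1
    ext x
    simp [enorm_eq_nnnorm, ← ENNReal.coe_natCast]
  refine tendsto_of_tendsto_of_tendsto_of_le_of_le' tendsto_const_nhds ?_
    (Eventually.of_forall fun _ => zero_le) hmarkov
  simpa using ENNReal.Tendsto.const_mul ENNReal.tendsto_inv_nat_nhds_zero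
    (Or.inr ENNReal.ofReal_ne_top)

theorem exists_strictMono_unifIntegrable_indicator_nnnorm_lt {f : ℕ → Ω → E}
    (hm : ∀ n, StronglyMeasurable (f n)) (hf : ∀ n, Integrable (f n) μ) {C : ℝ}
    (hC : ∀ n, ∫ x, ‖f n x‖ ∂μ ≤ C) :
    ∃ φ : ℕ → ℕ, StrictMono φ ∧
      UnifIntegrable (fun k : ℕ => {x | (k : ℝ≥0) ≤ ‖f (φ k) x‖₊}ᶜ.indicator (f (φ k))) 1 μ := by
  set T : ℕ → ℕ → Set Ω := fun n j => {x | (j : ℝ≥0) ≤ ‖f n x‖₊}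
  have hT (n j : ℕ) : MeasurableSet (T n j) :=
    measurableSet_le measurable_const (hm n).nnnorm.measurable
  have hT_anti (n : ℕ) {i j : ℕ} (hij : i ≤ j) : T n j ⊆ T n i :=
    fun x (hx : (j : ℝ≥0) ≤ _) => le_trans (by exact_mod_cast hij) hx
  set a : ℕ → ℕ → ℝ := fun n j => ∫ x in T n j, ‖f n x‖ ∂μ
  obtain ⟨φ, hφ, hdiag⟩ := exists_strictMono_eventually_le_diag_add (a := a) (C := C)
    (fun n j => setIntegral_nonneg (hT n j) fun _ _ => norm_nonneg _)
    (fun n j => (setIntegral_le_integral (hf n).norm (ae_of_all _ fun _ => norm_nonneg _)).trans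
      (hC n))
  refine ⟨φ, hφ, unifIntegrable_of le_rfl ENNReal.one_ne_top
    (fun k => (hf _).1.indicator (hT _ _).compl) fun ε hε => ?_⟩
  obtain ⟨J, hJ⟩ := hdiag ε hε
  obtain ⟨K, hK⟩ := (hJ.and (eventually_ge_atTop J)).exists_forall_of_atTop
  refine ⟨(max J K : ℕ), fun k => ?_⟩
  rw [indicator_nnnorm_ge_indicator_compl,
    eLpNorm_one_indicator_eq_ofReal_setIntegral_norm (hf _) ((hT _ _).diff (hT _ _))]
  refine ENNReal.ofReal_le_ofReal ?_
  rcases lt_or_ge k K with hk | hk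
  · rw [Set.sdiff_eq_empty.2 (hT_anti _ (hk.le.trans (le_max_right J K))), Measure.restrict_empty,
      integral_zero_measure]
    exact hε.le
  · calc ∫ x in T (φ k) (max J K) \ T (φ k) k, ‖f (φ k) x‖ ∂μ
        ≤ ∫ x in T (φ k) J \ T (φ k) k, ‖f (φ k) x‖ ∂μ :=
          setIntegral_mono_set (hf _).norm.integrableOn (ae_of_all _ fun _ => norm_nonneg _)
            (Set.sdiff_subset_sdiff_left (hT_anti _ (le_max_left J K))).eventuallyLE
      _ = a (φ k) J - a (φ k) k :=
          setIntegral_sdiff (hT _ _) (hf _).norm.integrableOn (hT_anti _ (hK k hk).2)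
      _ ≤ ε := by linarith [(hK k hk).1]

theorem exists_strictMono_tendsto_eLpNorm_indicator_iUnion_gt {g : ℕ → Ω → E}
    (hg : ∀ n, Integrable (g n) μ) {s : ℕ → Set Ω} (hs : Tendsto (fun n => μ (s n)) atTop (𝓝 0)) :
    ∃ ψ : ℕ → ℕ, StrictMono ψ ∧
      Tendsto (fun i => eLpNorm ((⋃ j > i, s (ψ j)).indicator (g (ψ i))) 1 μ) atTop (𝓝 0) := by
  -- Each later set carries at most `2⁻¹ ^ ψ j` of the mass of every earlier `g (ψ i)`, so the
  -- contributions of all later sets form a geometric series.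
  have hev (m : ℕ) : ∀ᶠ n in atTop,
      ∀ i ∈ Finset.range (m + 1), ∫⁻ x in s n, ‖g i x‖ₑ ∂μ ≤ 2⁻¹ ^ m :=
    (eventually_all_finset _).2 fun i _ =>
      ((tendsto_order.1 (tendsto_setLIntegral_zero (hg i).2.ne hs)).2 _
        (ENNReal.pow_pos (by norm_num) m)).mono fun _ => le_of_lt
  obtain ⟨ψ, hψ, hψs⟩ := exists_strictMono_rel_succ_of_eventually hev
  have hbound (i : ℕ) :
      eLpNorm ((⋃ j > i, s (ψ j)).indicator (g (ψ i))) 1 μ ≤ 2⁻¹ ^ i * 2 := by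
    have hsub : ⋃ j > i, s (ψ j) ⊆ ⋃ j, s (ψ (i + j + 1)) := by
      refine Set.iUnion₂_subset fun j hj => ?_
      obtain ⟨l, rfl⟩ := Nat.exists_eq_add_of_lt hj
      exact Set.subset_iUnion (fun l => s (ψ (i + l + 1))) l
    have hterm (j : ℕ) : ∫⁻ x in s (ψ (i + j + 1)), ‖g (ψ i) x‖ₑ ∂μ ≤ 2⁻¹ ^ i * 2⁻¹ ^ j := by
      calc ∫⁻ x in s (ψ (i + j + 1)), ‖g (ψ i) x‖ₑ ∂μ ≤ 2⁻¹ ^ ψ (i + j) :=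
            hψs (i + j) (ψ i)
              (Finset.mem_range_succ_iff.2 (hψ.monotone (Nat.le_add_right i j)))
        _ ≤ 2⁻¹ ^ (i + j) := pow_le_pow_right_of_le_one' (by norm_num) (hψ.id_le _)
        _ = 2⁻¹ ^ i * 2⁻¹ ^ j := pow_add _ _ _
    calc eLpNorm ((⋃ j > i, s (ψ j)).indicator (g (ψ i))) 1 μ
        ≤ ∫⁻ x in ⋃ j > i, s (ψ j), ‖g (ψ i) x‖ₑ ∂μ := by
          rw [eLpNorm_one_eq_lintegral_enorm]
          simp_rw [enorm_indicator_eq_indicator_enorm]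
          exact lintegral_indicator_le _ _
      _ ≤ ∫⁻ x in ⋃ j, s (ψ (i + j + 1)), ‖g (ψ i) x‖ₑ ∂μ := lintegral_mono_set hsub
      _ ≤ ∑' j, ∫⁻ x in s (ψ (i + j + 1)), ‖g (ψ i) x‖ₑ ∂μ := lintegral_iUnion_le _ _
      _ ≤ ∑' j, 2⁻¹ ^ i * 2⁻¹ ^ j := ENNReal.tsum_le_tsum hterm
      _ = 2⁻¹ ^ i * 2 := by
          rw [ENNReal.tsum_mul_left, ENNReal.tsum_geometric, ENNReal.one_sub_inv_two, inv_inv]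
  refine ⟨ψ, hψ, tendsto_of_tendsto_of_tendsto_of_le_of_le tendsto_const_nhds ?_
    (fun _ => zero_le) hbound⟩
  simpa using ENNReal.Tendsto.mul_const
    (ENNReal.tendsto_pow_atTop_nhds_zero_of_lt_one (by norm_num)) (Or.inr ENNReal.ofNat_ne_top)

theorem exists_subseq_unifIntegrable_indicator_compl_of_stronglyMeasurable {f : ℕ → Ω → E}
    (hm : ∀ n, StronglyMeasurable (f n)) (hf : ∀ n, Integrable (f n) μ) {C : ℝ}
    (hC : ∀ n, ∫ x, ‖f n x‖ ∂μ ≤ C) :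
    ∃ nk : ℕ → ℕ, StrictMono nk ∧ ∃ A : ℕ → Set Ω, (∀ k, MeasurableSet (A k)) ∧
      Pairwise (Disjoint on A) ∧ UnifIntegrable (fun k => (A k)ᶜ.indicator (f (nk k))) 1 μ := by
  obtain ⟨φ, hφ, htrunc⟩ := exists_strictMono_unifIntegrable_indicator_nnnorm_lt hm hf hC
  set E : ℕ → Set Ω := fun k => {x | (k : ℝ≥0) ≤ ‖f (φ k) x‖₊}
  have hE (k : ℕ) : MeasurableSet (E k) :=
    measurableSet_le measurable_const (hm _).nnnorm.measurable
  obtain ⟨ψ, hψ, htail⟩ := exists_strictMono_tendsto_eLpNorm_indicator_iUnion_gt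
    (fun k => hf (φ k)) (tendsto_measure_natCast_le_nnnorm (fun k => hf (φ k)) fun k => hC (φ k))
  set U : ℕ → Set Ω := fun i => ⋃ j > i, E (ψ j)
  have hU (i : ℕ) : MeasurableSet (U i) :=
    MeasurableSet.iUnion fun j => MeasurableSet.iUnion fun _ => hE (ψ j)
  refine ⟨φ ∘ ψ, hφ.comp hψ, fun i => E (ψ i) \ U i, fun i => (hE _).diff (hU i),
    pairwise_disjoint_sdiff_iUnion_gt (E ∘ ψ), ?_⟩
  have hsplit : (fun i => (E (ψ i) \ U i)ᶜ.indicator (f (φ (ψ i)))) =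
      (fun i => (E (ψ i))ᶜ.indicator (f (φ (ψ i)))) +
        fun i => (E (ψ i) ∩ U i).indicator (f (φ (ψ i))) := by
    ext i x
    by_cases hxE : x ∈ E (ψ i) <;> by_cases hxU : x ∈ U i <;> simp [hxE, hxU]
  have hsmall : Tendsto (fun i => eLpNorm ((E (ψ i) ∩ U i).indicator (f (φ (ψ i)))) 1 μ)
      atTop (𝓝 0) := by
    refine tendsto_of_tendsto_of_tendsto_of_le_of_le tendsto_const_nhds htail
      (fun _ => zero_le) fun i => ?_
    rw [← Set.indicator_indicator]
    exact eLpNorm_indicator_le _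
  rw [comp_def, hsplit]
  exact (htrunc.comp ψ).add
    (unifIntegrable_of_tendsto_Lp_zero le_rfl ENNReal.one_ne_top
      (fun i => memLp_one_iff_integrable.2 ((hf _).indicator ((hE _).inter (hU i)))) hsmall) le_rfl
    (fun i => (hf _).1.indicator (hE _).compl) fun i => (hf _).1.indicator ((hE _).inter (hU i))

theorem exists_subseq_unifIntegrable_indicator_compl {f : ℕ → Ω → E}
    (hf : ∀ n, Integrable (f n) μ) {C : ℝ} (hC : ∀ n, ∫ x, ‖f n x‖ ∂μ ≤ C) :
    ∃ nk : ℕ → ℕ, StrictMono nk ∧ ∃ A : ℕ → Set Ω, (∀ k, MeasurableSet (A k)) ∧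
      Pairwise (Disjoint on A) ∧ UnifIntegrable (fun k => (A k)ᶜ.indicator (f (nk k))) 1 μ := by
  have hmk (n : ℕ) := (hf n).1.ae_eq_mk
  obtain ⟨nk, hnk, A, hA, hdisj, hui⟩ :=
    exists_subseq_unifIntegrable_indicator_compl_of_stronglyMeasurable
      (fun n => (hf n).1.stronglyMeasurable_mk) (fun n => (hf n).congr (hmk n))
      fun n => (integral_congr_ae ((hmk n).fun_comp norm)).symm.trans_le (hC n)
  exact ⟨nk, hnk, A, hA, hdisj, hui.ae_eq fun k => (hmk _).symm.indicator⟩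

end

theorem stmt16_general {Ω : Type*} [MeasurableSpace Ω] (μ : Measure Ω)
    (f : ℕ → Ω → ℝ) (hint : ∀ k, Integrable (f k) μ)
    (hbd : ∃ C : ℝ, ∀ k, ∫ ω, |f k ω| ∂μ ≤ C) :
    ∃ nk : ℕ → ℕ, StrictMono nk ∧
      ∃ A : ℕ → Set Ω, (∀ k, MeasurableSet (A k)) ∧
        Pairwise (Function.onFun Disjoint A) ∧
        ∀ ε > (0:ℝ), ∃ δ > (0:ℝ), ∀ B : Set Ω, MeasurableSet B →
          μ B < ENNReal.ofReal δ →
          ∀ k, ∫ ω in B, |Set.indicator (A k)ᶜ (f (nk k)) ω| ∂μ < ε := by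
  obtain ⟨C, hC⟩ := hbd
  obtain ⟨nk, hnk, A, hA, hdisj, hui⟩ :=
    exists_subseq_unifIntegrable_indicator_compl hint (C := C) (by simpa only [Real.norm_eq_abs])
  refine ⟨nk, hnk, A, hA, hdisj, fun ε hε => ?_⟩
  obtain ⟨δ, hδ, h⟩ := hui.exists_setIntegral_norm_lt (fun k => (hint _).indicator (hA k).compl) hε
  exact ⟨δ, hδ, fun B hB hμB k => by simpa only [Real.norm_eq_abs] using h k B hB hμB⟩

/-- Kadec–Pełczyński subsequence splitting lemma in `L¹` of a finite measure: an
`L¹`-bounded sequence admits a subsequence `(f_{n_k})` and pairwise disjoint measurable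
sets `(A_k)` such that `(f_{n_k} χ_{A_kᶜ})` is uniformly integrable. -/
theorem stmt16 {Ω : Type*} [MeasurableSpace Ω] (μ : Measure Ω) [IsFiniteMeasure μ]
    (f : ℕ → Ω → ℝ) (hint : ∀ k, Integrable (f k) μ)
    (hbd : ∃ C : ℝ, ∀ k, ∫ ω, |f k ω| ∂μ ≤ C) :
    ∃ nk : ℕ → ℕ, StrictMono nk ∧
      ∃ A : ℕ → Set Ω, (∀ k, MeasurableSet (A k)) ∧
        Pairwise (Function.onFun Disjoint A) ∧
        ∀ ε > (0:ℝ), ∃ δ > (0:ℝ), ∀ B : Set Ω, MeasurableSet B →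
          μ B < ENNReal.ofReal δ →
          ∀ k, ∫ ω in B, |Set.indicator (A k)ᶜ (f (nk k)) ω| ∂μ < ε :=
  stmt16_general μ f hint hbd
end

section
/- Let μ be a finite Borel measure on S^{n-1} and K₀ : ℝ₊ × S^{n-1} → ℝ such that for every λ > 0, the modulus ω_λ(δ) → 0 as δ → 0, where ω_λ(δ) is the supremum over finite Borel partitions (A_i) of S^{n-1} of Σ_i sup{ ∫_{A_i} |K₀(s,t) − K₀(s′,t)| dμ(t) : s, s′ ∈ [0,λ], |s − s′| ≤ δ }. Then there exists a Borel set A₀ ⊂ S^{n-1} with μ(A₀) = 0 such that for every t ∉ A₀, the function s ↦ K₀(s,t) is uniformly continuous on every bounded set of rational numbers. -/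
/-!
For fixed `k` and `j`, let `G_{k,j}(t)` be the supremum of `|K₀(s,t) - K₀(s',t)|` over rational
`s, s' ∈ [0, k + 1]` with `|s - s'| ≤ δ_{k,j}`, where `δ_{k,j}` is the modulus of `K₀` for
`ε = 2⁻ʲ`. Choosing, on each piece of a measurable partition, a pair that attains the maximum
among finitely many pairs shows that the partition modulus bounds the integral of a finite
supremum, and by monotone convergence `∫ G_{k,j} dμ ≤ 2⁻ʲ`. Hence `∑ⱼ G_{k,j}(t) < ∞` for almost
every `t`, so `G_{k,j}(t) → 0`, which is uniform continuity of `K₀(·,t)` on `ℚ ∩ [0, k]`.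
-/

open MeasureTheory Filter Topology Set

open scoped ENNReal

variable {α : Type*}

section Partition

variable [MeasurableSpace α] {μ : Measure α}

structure IsMeasurablePartition {ι : Type*} (A : ι → Set α) : Prop where
  measurableSet : ∀ i, MeasurableSet (A i)
  pairwise_disjoint : Pairwise (Function.onFun Disjoint A)
  iUnion_eq : ⋃ i, A i = univ

theorem exists_isMeasurablePartition_forall_le {ι β : Type*} [Finite ι] [Nonempty ι]
    [LinearOrder ι] [LocallyFiniteOrderBot ι] [LinearOrder β] [TopologicalSpace β]
    [OrderClosedTopology β] [SecondCountableTopology β] [MeasurableSpace β] [OpensMeasurableSpace β]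
    {f : ι → α → β} (hf : ∀ i, Measurable (f i)) :
    ∃ A : ι → Set α, IsMeasurablePartition A ∧ ∀ i, ∀ t ∈ A i, ∀ j, f j t ≤ f i t := by
  set M : ι → Set α := fun i => {t | ∀ j, f j t ≤ f i t}
  have hM : ∀ i, MeasurableSet (M i) := fun i => by
    simp only [M, ofPred_forall]
    exact .iInter fun j => measurableSet_le (hf j) (hf i)
  refine ⟨disjointed M, ⟨fun i => ?_, disjoint_disjointed M, ?_⟩,
    fun i t ht => disjointed_subset M i ht⟩
  · rw [disjointed_eq_inter_compl]
    exact (hM i).inter (.iInter fun j => .iInter fun _ => (hM j).compl)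
  · rw [iUnion_disjointed, eq_univ_iff_forall]
    exact fun t => mem_iUnion.2 (Finite.exists_max (f · t))

theorem lintegral_iSup_le_of_isMeasurablePartition {ι : Type*} [Fintype ι] [Nonempty ι]
    [LinearOrder ι] [LocallyFiniteOrderBot ι] {f : ι → α → ℝ≥0∞} (hf : ∀ i, Measurable (f i))
    {ε : ℝ≥0∞} (h : ∀ A : ι → Set α, IsMeasurablePartition A → ∑ i, ∫⁻ t in A i, f i t ∂μ ≤ ε) :
    ∫⁻ t, ⨆ i, f i t ∂μ ≤ ε := by
  obtain ⟨A, hA, hmax⟩ := exists_isMeasurablePartition_forall_le hf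
  calc ∫⁻ t, ⨆ i, f i t ∂μ = ∫⁻ t in ⋃ i, A i, ⨆ i, f i t ∂μ := by
        rw [hA.iUnion_eq, setLIntegral_univ]
    _ = ∑ i, ∫⁻ t in A i, ⨆ j, f j t ∂μ := by
        rw [lintegral_iUnion hA.measurableSet hA.pairwise_disjoint, tsum_fintype]
    _ = ∑ i, ∫⁻ t in A i, f i t ∂μ := Finset.sum_congr rfl fun i _ =>
        setLIntegral_congr_fun (hA.measurableSet i) fun t ht =>
          le_antisymm (iSup_le (hmax i t ht)) (le_iSup (f · t) i)
    _ ≤ ε := h A hA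

theorem lintegral_iSup_le_of_forall_isMeasurablePartition {β : Type*} [Countable β]
    {f : β → α → ℝ≥0∞} (hf : ∀ b, Measurable (f b)) {ε : ℝ≥0∞}
    (h : ∀ (m : ℕ) (A : Fin m → Set α), IsMeasurablePartition A →
      ∀ p : Fin m → β, ∑ i, ∫⁻ t in A i, f (p i) t ∂μ ≤ ε) :
    ∫⁻ t, ⨆ b, f b t ∂μ ≤ ε := by
  rcases isEmpty_or_nonempty β with _ | _
  · simp
  obtain ⟨e, he⟩ := exists_surjective_nat β
  set g : ℕ → α → ℝ≥0∞ := fun N t => ⨆ i : Fin (N + 1), f (e i) t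
  have hg_mono : Monotone g := fun N N' hN t =>
    iSup_le fun i => le_iSup_of_le (Fin.castLE (by omega) i) le_rfl
  have hg_iSup : ∀ t, ⨆ b, f b t = ⨆ N, g N t := fun t => by
    rw [← he.iSup_comp]
    exact le_antisymm (iSup_le fun N => le_iSup_of_le N (le_iSup_of_le (Fin.last N) le_rfl))
      (iSup_le fun N => iSup_le fun i => le_iSup (fun n : ℕ => f (e n) t) i)
  have hg_meas : ∀ N, Measurable (g N) := fun N => .iSup fun i => hf _
  simp only [hg_iSup, lintegral_iSup hg_meas hg_mono]
  exact iSup_le fun N => lintegral_iSup_le_of_isMeasurablePartition (fun i => hf _)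
    fun A hA => h _ A hA _

end Partition

def ratPairs (lam δ : ℝ) : Set (ℚ × ℚ) :=
  {p | (p.1 : ℝ) ∈ Icc 0 lam ∧ (p.2 : ℝ) ∈ Icc 0 lam ∧ |(p.1 : ℝ) - p.2| ≤ δ}

noncomputable def ratOscillation (K : ℝ → α → ℝ) (lam δ : ℝ) (t : α) : ℝ≥0∞ :=
  ⨆ p : ratPairs lam δ, ENNReal.ofReal |K p.1.1 t - K p.1.2 t|

section ratOscillation

variable {K : ℝ → α → ℝ} {lam δ : ℝ}

theorem ofReal_abs_sub_le_ratOscillation {p : ℚ × ℚ} (hp : p ∈ ratPairs lam δ) (t : α) :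
    ENNReal.ofReal |K p.1 t - K p.2 t| ≤ ratOscillation K lam δ t :=
  le_iSup (fun p : ratPairs lam δ => ENNReal.ofReal |K p.1.1 t - K p.1.2 t|) ⟨p, hp⟩

variable [MeasurableSpace α] {μ : Measure α}

theorem measurable_ratOscillation (hmeas : ∀ s : ℝ, 0 ≤ s → Measurable (K s)) :
    Measurable (ratOscillation K lam δ) :=
  .iSup fun p => ((hmeas _ p.2.1.1).sub (hmeas _ p.2.2.1.1)).abs.ennreal_ofReal

theorem lintegral_ratOscillation_le (hmeas : ∀ s : ℝ, 0 ≤ s → Measurable (K s))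
    (hint : ∀ s : ℝ, 0 ≤ s → Integrable (K s) μ) {ε : ℝ}
    (h : ∀ (m : ℕ) (A : Fin m → Set α),
      (∀ i, MeasurableSet (A i)) → Pairwise (Function.onFun Disjoint A) → (⋃ i, A i) = univ →
      ∀ s s' : Fin m → ℝ, (∀ i, s i ∈ Icc 0 lam ∧ s' i ∈ Icc 0 lam ∧ |s i - s' i| ≤ δ) →
        ∑ i, ∫ t in A i, |K (s i) t - K (s' i) t| ∂μ ≤ ε) :
    ∫⁻ t, ratOscillation K lam δ t ∂μ ≤ ENNReal.ofReal ε := by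
  refine lintegral_iSup_le_of_forall_isMeasurablePartition
    (fun p => ((hmeas _ p.2.1.1).sub (hmeas _ p.2.2.1.1)).abs.ennreal_ofReal) fun m A hA p => ?_
  have hp := fun i => (p i).2
  calc ∑ i, ∫⁻ t in A i, ENNReal.ofReal |K (p i).1.1 t - K (p i).1.2 t| ∂μ
      = ∑ i, ENNReal.ofReal (∫ t in A i, |K (p i).1.1 t - K (p i).1.2 t| ∂μ) :=
        Finset.sum_congr rfl fun i _ => (ofReal_integral_eq_lintegral_ofReal
          ((hint _ (hp i).1.1).sub (hint _ (hp i).2.1.1)).abs.integrableOn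
          (ae_of_all _ fun _ => abs_nonneg _)).symm
    _ = ENNReal.ofReal (∑ i, ∫ t in A i, |K (p i).1.1 t - K (p i).1.2 t| ∂μ) :=
        (ENNReal.ofReal_sum_of_nonneg fun i _ => integral_nonneg fun _ => abs_nonneg _).symm
    _ ≤ ENNReal.ofReal ε := ENNReal.ofReal_le_ofReal <|
        h m A hA.measurableSet hA.pairwise_disjoint hA.iUnion_eq _ _ hp

end ratOscillation

theorem stmt18_general {n : ℕ} (μ : Measure (Metric.sphere (0 : EuclideanSpace ℝ (Fin n)) 1))
    (K₀ : ℝ → Metric.sphere (0 : EuclideanSpace ℝ (Fin n)) 1 → ℝ)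
    (hmeas : ∀ s : ℝ, 0 ≤ s → Measurable (K₀ s))
    (hint : ∀ s : ℝ, 0 ≤ s → Integrable (K₀ s) μ)
    (hmod : ∀ lam > (0:ℝ), ∀ ε > (0:ℝ), ∃ δ > (0:ℝ),
      ∀ (m : ℕ) (A : Fin m → Set (Metric.sphere (0 : EuclideanSpace ℝ (Fin n)) 1)),
        (∀ i, MeasurableSet (A i)) → Pairwise (Function.onFun Disjoint A) →
        (⋃ i, A i) = Set.univ →
        ∀ s s' : Fin m → ℝ,
          (∀ i, s i ∈ Set.Icc 0 lam ∧ s' i ∈ Set.Icc 0 lam ∧ |s i - s' i| ≤ δ) →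
          ∑ i, ∫ t in A i, |K₀ (s i) t - K₀ (s' i) t| ∂μ ≤ ε) :
    ∃ A₀ : Set (Metric.sphere (0 : EuclideanSpace ℝ (Fin n)) 1),
      MeasurableSet A₀ ∧ μ A₀ = 0 ∧
      ∀ t ∉ A₀, ∀ k : ℕ, ∀ ε > (0:ℝ), ∃ δ > (0:ℝ), ∀ s s' : ℚ,
        (s : ℝ) ∈ Set.Icc (0:ℝ) k → (s' : ℝ) ∈ Set.Icc (0:ℝ) k →
        |(s : ℝ) - (s' : ℝ)| ≤ δ → |K₀ (s : ℝ) t - K₀ (s' : ℝ) t| ≤ ε := by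
  choose δ hδ_pos hδ using fun k j : ℕ =>
    hmod ((k : ℝ) + 1) (by positivity) ((2 : ℝ)⁻¹ ^ j) (by positivity)
  set G : ℕ → ℕ → _ → ℝ≥0∞ := fun k j => ratOscillation K₀ ((k : ℝ) + 1) (δ k j)
  have hG_meas : ∀ k j, Measurable (G k j) := fun k j => measurable_ratOscillation hmeas
  have hG_sum_meas : ∀ k, Measurable fun t => ∑' j, G k j t := fun k => .tsum (hG_meas k)
  have hG_sum : ∀ k, ∫⁻ t, ∑' j, G k j t ∂μ ≠ ∞ := fun k => by
    rw [lintegral_tsum fun j => (hG_meas k j).aemeasurable]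
    refine ne_top_of_le_ne_top (b := ∑' j : ℕ, 2⁻¹ ^ j) (by simp [ENNReal.tsum_geometric]) ?_
    refine ENNReal.tsum_le_tsum fun j => (lintegral_ratOscillation_le hmeas hint (hδ k j)).trans ?_
    simp [ENNReal.ofReal_pow, ENNReal.inv_pow]
  refine ⟨⋃ k, {t | ∑' j, G k j t = ∞},
    .iUnion fun k => measurableSet_eq_fun (hG_sum_meas k) measurable_const,
    measure_iUnion_null fun k => ?_, fun t ht k ε hε => ?_⟩
  · simpa [ae_iff] using ae_lt_top (hG_sum_meas k) (hG_sum k)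
  have hG_lim : Tendsto (G k · t) atTop (𝓝 0) :=
    ENNReal.tendsto_atTop_zero_of_tsum_ne_top fun h => ht (mem_iUnion.2 ⟨k, h⟩)
  obtain ⟨j, hj⟩ := (hG_lim.eventually (gt_mem_nhds (ENNReal.ofReal_pos.2 hε))).exists
  refine ⟨δ k j, hδ_pos k j, fun s s' hs hs' hss => ?_⟩
  have hp : ((s, s') : ℚ × ℚ) ∈ ratPairs ((k : ℝ) + 1) (δ k j) :=
    ⟨⟨hs.1, by linarith [hs.2]⟩, ⟨hs'.1, by linarith [hs'.2]⟩, hss⟩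
  exact ((ENNReal.ofReal_lt_ofReal_iff hε).1
    ((ofReal_abs_sub_le_ratOscillation hp t).trans_lt hj)).le

/-- If the partition modulus `ω_λ(δ)` of the kernel `K₀` tends to `0` as `δ → 0` for every
`λ > 0`, then off a μ-null Borel set `A₀`, the function `s ↦ K₀(s,t)` is uniformly
continuous on every bounded set of rational numbers. -/
theorem stmt18 {n : ℕ} (μ : Measure (Metric.sphere (0 : EuclideanSpace ℝ (Fin n)) 1))
    [IsFiniteMeasure μ]
    (K₀ : ℝ → Metric.sphere (0 : EuclideanSpace ℝ (Fin n)) 1 → ℝ)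
    (hmeas : ∀ s : ℝ, 0 ≤ s → Measurable (K₀ s))
    (hint : ∀ s : ℝ, 0 ≤ s → Integrable (K₀ s) μ)
    (hmod : ∀ lam > (0:ℝ), ∀ ε > (0:ℝ), ∃ δ > (0:ℝ),
      ∀ (m : ℕ) (A : Fin m → Set (Metric.sphere (0 : EuclideanSpace ℝ (Fin n)) 1)),
        (∀ i, MeasurableSet (A i)) → Pairwise (Function.onFun Disjoint A) →
        (⋃ i, A i) = Set.univ →
        ∀ s s' : Fin m → ℝ,
          (∀ i, s i ∈ Set.Icc 0 lam ∧ s' i ∈ Set.Icc 0 lam ∧ |s i - s' i| ≤ δ) →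
          ∑ i, ∫ t in A i, |K₀ (s i) t - K₀ (s' i) t| ∂μ ≤ ε) :
    ∃ A₀ : Set (Metric.sphere (0 : EuclideanSpace ℝ (Fin n)) 1),
      MeasurableSet A₀ ∧ μ A₀ = 0 ∧
      ∀ t ∉ A₀, ∀ k : ℕ, ∀ ε > (0:ℝ), ∃ δ > (0:ℝ), ∀ s s' : ℚ,
        (s : ℝ) ∈ Set.Icc (0:ℝ) k → (s' : ℝ) ∈ Set.Icc (0:ℝ) k →
        |(s : ℝ) - (s' : ℝ)| ≤ δ → |K₀ (s : ℝ) t - K₀ (s' : ℝ) t| ≤ ε :=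
  stmt18_general μ K₀ hmeas hint hmod
end
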